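/- arXiv:0904.3142 — 7 statements merged into one kernel-verified Lean document; each statement's English description precedes it below -/
import Mathlib

section
/- Let X be a normed vector space over ℝ or ℂ and let T_1, …, T_n be commuting continuous linear operators on X. If (x_m) and (y_m) are sequences in X with x_m → x and y_m → y for some x, y ∈ X, and y_m ∈ J_{(T_1,…,T_n)}(x_m) for every m ∈ ℕ, then y ∈ J_{(T_1,…,T_n)}(x). -/
open Filter Topology

variable {𝕜 : Type*} [RCLike 𝕜] {X : Type*} [NormedAddCommGroup X] [NormedSpace 𝕜 X]

/-- The composition `T₁^{k₁} ∘ T₂^{k₂} ∘ ⋯ ∘ Tₙ^{kₙ}` of powers of a tuple of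
continuous linear operators. -/
noncomputable def tupleProd {n : ℕ} (T : Fin n → X →L[𝕜] X) (k : Fin n → ℕ) : X →L[𝕜] X :=
  (List.ofFn fun j => T j ^ k j).prod

/-- The extended limit set `J_{(T₁,…,Tₙ)}(x)`. -/
noncomputable def JSet {n : ℕ} (T : Fin n → X →L[𝕜] X) (x : X) : Set X :=
  {y | ∃ (u : ℕ → X) (k : ℕ → Fin n → ℕ),
    Tendsto u atTop (𝓝 x) ∧
    Tendsto (fun m => ∑ j, k m j) atTop atTop ∧
    Tendsto (fun m => tupleProd T (k m) (u m)) atTop (𝓝 y)}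

/-- If `xₘ → x`, `yₘ → y` and `yₘ ∈ J_{(T₁,…,Tₙ)}(xₘ)` for every `m`, then
`y ∈ J_{(T₁,…,Tₙ)}(x)`. -/
theorem JSet_limit {n : ℕ} (T : Fin n → X →L[𝕜] X)
    (hcomm : ∀ i j, Commute (T i) (T j))
    (x y : X) (xs ys : ℕ → X)
    (hxs : Tendsto xs atTop (𝓝 x)) (hys : Tendsto ys atTop (𝓝 y))
    (hmem : ∀ m : ℕ, ys m ∈ JSet T (xs m)) :
    y ∈ JSet T x := by
  choose u k hu hk hT using hmem
  have hpos : ∀ m : ℕ, (0 : ℝ) < 1 / (m + 1) := fun m => by positivity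
  have key : ∀ m : ℕ, ∃ p, dist (u m p) (xs m) < 1 / (m + 1) ∧
      m ≤ ∑ j, k m p j ∧
      dist (tupleProd T (k m p) (u m p)) (ys m) < 1 / (m + 1) := by
    intro m
    have e1 : ∀ᶠ p in atTop, dist (u m p) (xs m) < 1 / (m + 1) :=
      Metric.tendsto_nhds.mp (hu m) _ (hpos m)
    have e2 : ∀ᶠ p in atTop, m ≤ ∑ j, k m p j := (hk m).eventually_ge_atTop m
    have e3 : ∀ᶠ p in atTop,
        dist (tupleProd T (k m p) (u m p)) (ys m) < 1 / (m + 1) :=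
      Metric.tendsto_nhds.mp (hT m) _ (hpos m)
    exact ((e1.and e2).and e3).exists.imp fun p hp => ⟨hp.1.1, hp.1.2, hp.2⟩
  choose p hp1 hp2 hp3 using key
  refine ⟨fun m => u m (p m), fun m => k m (p m), ?_, ?_, ?_⟩
  · have hlim : Tendsto (fun m : ℕ => (1 : ℝ) / (m + 1)) atTop (𝓝 0) :=
      tendsto_one_div_add_atTop_nhds_zero_nat
    have h0 : Tendsto (fun m => dist (u m (p m)) (xs m)) atTop (𝓝 0) :=
      squeeze_zero (fun m => dist_nonneg) (fun m => (hp1 m).le) hlim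
    exact (tendsto_iff_dist_tendsto_zero.mpr
      (squeeze_zero (fun m => dist_nonneg)
        (fun m => dist_triangle (u m (p m)) (xs m) x)
        (by simpa using h0.add (tendsto_iff_dist_tendsto_zero.mp hxs))))
  · exact tendsto_atTop_mono hp2 tendsto_id
  · have hlim : Tendsto (fun m : ℕ => (1 : ℝ) / (m + 1)) atTop (𝓝 0) :=
      tendsto_one_div_add_atTop_nhds_zero_nat
    have h0 : Tendsto (fun m => dist (tupleProd T (k m (p m)) (u m (p m))) (ys m))
        atTop (𝓝 0) :=
      squeeze_zero (fun m => dist_nonneg) (fun m => (hp3 m).le) hlim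
    exact (tendsto_iff_dist_tendsto_zero.mpr
      (squeeze_zero (fun m => dist_nonneg)
        (fun m => dist_triangle (tupleProd T (k m (p m)) (u m (p m))) (ys m) y)
        (by simpa using h0.add (tendsto_iff_dist_tendsto_zero.mp hys))))
end

section
/- Let X be a normed vector space over ℝ or ℂ and let T_1, …, T_n be commuting continuous linear operators on X. For every x ∈ X, the set J_{(T_1,…,T_n)}(x) is closed in X and is T_j-invariant for every j = 1, …, n, i.e. T_j(J_{(T_1,…,T_n)}(x)) ⊆ J_{(T_1,…,T_n)}(x). -/
open Filter Topology

variable {𝕜 : Type*} [RCLike 𝕜] {X : Type*} [NormedAddCommGroup X] [NormedSpace 𝕜 X]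

lemma tupleProd_succ {m : ℕ} (T : Fin (m+1) → X →L[𝕜] X) (k : Fin (m+1) → ℕ) :
    tupleProd T k = T 0 ^ k 0 * tupleProd (fun i : Fin m => T i.succ) (fun i => k i.succ) := by
  simp [tupleProd, List.ofFn_succ]

lemma tupleProd_add_single {n : ℕ} (T : Fin n → X →L[𝕜] X)
    (hcomm : ∀ i j, Commute (T i) (T j)) (k : Fin n → ℕ) (j : Fin n) :
    tupleProd T (fun i => k i + if i = j then 1 else 0) = T j * tupleProd T k := by
  induction n with
  | zero => exact j.elim0
  | succ m ih =>
    rcases Fin.eq_zero_or_eq_succ j with rfl | ⟨j', rfl⟩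
    · rw [tupleProd_succ, tupleProd_succ T k]
      have h1 : (fun i : Fin m => (k i.succ + if i.succ = (0 : Fin (m+1)) then 1 else 0))
          = fun i => k i.succ := by
        funext i; simp [Fin.succ_ne_zero]
      simp only [h1]
      norm_num [pow_succ', mul_assoc]
    · rw [tupleProd_succ, tupleProd_succ T k]
      have h0 : ((0 : Fin (m+1)) = j'.succ) = False := by
        simp [(Fin.succ_ne_zero j').symm]
      have h1 : (fun i : Fin m => (k i.succ + if i.succ = j'.succ then 1 else 0))
          = fun i => (k i.succ + if i = j' then 1 else 0) := by
        funext i; simp [Fin.succ_inj]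
      simp only [h0, if_false, add_zero, h1]
      rw [ih (fun i : Fin m => T i.succ) (fun i j => hcomm _ _) (fun i => k i.succ) j']
      have hc : Commute (T j'.succ) (T 0 ^ k 0) := (hcomm _ _).pow_right _
      rw [← mul_assoc, ← hc.eq, mul_assoc]

/-- For every `x`, the extended limit set `J_{(T₁,…,Tₙ)}(x)` is closed and invariant
under each `Tⱼ`. -/
theorem isClosed_and_invariant_JSet {n : ℕ} (T : Fin n → X →L[𝕜] X)
    (hcomm : ∀ i j, Commute (T i) (T j)) (x : X) :
    IsClosed (JSet T x) ∧ ∀ j : Fin n, (T j) '' (JSet T x) ⊆ JSet T x := by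
  constructor
  · apply IsSeqClosed.isClosed
    intro y Y hmem hlim
    choose u k hu hk hconv using hmem
    have key : ∀ p : ℕ, ∃ m, (dist (u p m) x < 1/(p+1) ∧ p ≤ ∑ j, k p m j) ∧
        dist (tupleProd T (k p m) (u p m)) (y p) < 1/(p+1) := by
      intro p
      have hp : (0:ℝ) < 1/(p+1) := by positivity
      have h1 : ∀ᶠ m in atTop, dist (u p m) x < 1/(p+1) :=
        (Metric.tendsto_nhds.mp (hu p)) _ hp
      have h2 : ∀ᶠ m in atTop, p ≤ ∑ j, k p m j := (hk p).eventually_ge_atTop p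
      have h3 : ∀ᶠ m in atTop, dist (tupleProd T (k p m) (u p m)) (y p) < 1/(p+1) :=
        (Metric.tendsto_nhds.mp (hconv p)) _ hp
      exact ((h1.and h2).and h3).exists
    choose m hm using key
    have hm1 : ∀ p, dist (u p (m p)) x < 1/(p+1) := fun p => (hm p).1.1
    have hm2 : ∀ p, p ≤ ∑ j, k p (m p) j := fun p => (hm p).1.2
    have hm3 : ∀ p, dist (tupleProd T (k p (m p)) (u p (m p))) (y p) < 1/(p+1) :=
      fun p => (hm p).2
    refine ⟨fun p => u p (m p), fun p => k p (m p), ?_, ?_, ?_⟩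
    · rw [tendsto_iff_dist_tendsto_zero]
      exact squeeze_zero (fun p => dist_nonneg) (fun p => (hm1 p).le)
        tendsto_one_div_add_atTop_nhds_zero_nat
    · exact tendsto_atTop_mono hm2 tendsto_id
    · rw [tendsto_iff_dist_tendsto_zero]
      have hb : Tendsto (fun p : ℕ => 1/((p:ℝ)+1) + dist (y p) Y) atTop (𝓝 (0+0)) :=
        tendsto_one_div_add_atTop_nhds_zero_nat.add
          (tendsto_iff_dist_tendsto_zero.mp hlim)
      rw [add_zero] at hb
      refine squeeze_zero (fun p => dist_nonneg) (fun p => ?_) hb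
      calc dist (tupleProd T (k p (m p)) (u p (m p))) Y
          ≤ dist (tupleProd T (k p (m p)) (u p (m p))) (y p) + dist (y p) Y :=
            dist_triangle _ _ _
        _ ≤ 1/((p:ℝ)+1) + dist (y p) Y := by
            gcongr; exact (hm3 p).le
  · rintro j z ⟨y, ⟨u, k, hu, hk, hconv⟩, rfl⟩
    refine ⟨u, fun mm i => k mm i + if i = j then 1 else 0, hu, ?_, ?_⟩
    · have : ∀ mm, (∑ i, k mm i) ≤ ∑ i, (k mm i + if i = j then 1 else 0) := by
        intro mm
        apply Finset.sum_le_sum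
        intro i _
        exact Nat.le_add_right _ _
      exact tendsto_atTop_mono this hk
    · have heq : ∀ mm, tupleProd T (fun i => k mm i + if i = j then 1 else 0) (u mm)
          = T j (tupleProd T (k mm) (u mm)) := by
        intro mm
        rw [tupleProd_add_single T hcomm (k mm) j]
        rfl
      simp only [heq]
      exact ((T j).continuous.tendsto y).comp hconv
end

section
/- Let a_1, a_2, …, a_n be negative real numbers such that the n+1 real numbers 1, a_1, a_2, …, a_n are linearly independent over ℚ. Then the set { ((e^{a_1})^k (−√e)^{s_1}, (e^{a_2})^k (−√e)^{s_2}, …, (e^{a_n})^k (−√e)^{s_n}) : k, s_1, …, s_n ∈ ℕ∪{0} } is dense in ℝ^n. -/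
set_option maxHeartbeats 1000000

open Filter Topology Submodule

variable {n : ℕ}

def kronG (a : Fin n → ℝ) : AddSubgroup (Fin n → ℝ) where
  carrier := {x | ∃ (k : ℤ) (z : Fin n → ℤ), x = fun j => k * a j + z j}
  zero_mem' := ⟨0, 0, by funext j; simp⟩
  add_mem' := by
    rintro x y ⟨k, z, rfl⟩ ⟨k', z', rfl⟩
    exact ⟨k + k', z + z', by funext j; push_cast [Pi.add_apply]; ring⟩
  neg_mem' := by
    rintro x ⟨k, z, rfl⟩
    exact ⟨-k, -z, by funext j; push_cast [Pi.neg_apply]; ring⟩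

lemma indep_consequence {a : Fin n → ℝ}
    (hind : LinearIndependent ℚ (Fin.cons (1 : ℝ) a : Fin (n + 1) → ℝ))
    (m : Fin n → ℤ) (m₀ : ℤ) (h : ∑ j, (m j : ℝ) * a j = m₀) : m = 0 := by
  have H := Fintype.linearIndependent_iff.mp hind
    (Fin.cons (-(m₀ : ℚ)) (fun j => (m j : ℚ)))
  have h0 : ∑ i : Fin (n+1), (Fin.cons (-(m₀:ℚ)) (fun j => (m j : ℚ)) : Fin (n+1) → ℚ) i •
      (Fin.cons (1:ℝ) a : Fin (n+1) → ℝ) i = 0 := by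
    rw [Fin.sum_univ_succ]
    simp only [Fin.cons_succ, Fin.cons_zero]
    have : ∀ j : Fin n, ((m j : ℚ)) • a j = (m j : ℝ) * a j := by
      intro j; rw [Rat.smul_def]; push_cast; ring
    rw [Finset.sum_congr rfl (fun j _ => this j), h, Rat.smul_def]
    push_cast; ring
  funext j
  have := H h0 j.succ
  simpa using this

theorem kron_dense (a : Fin n → ℝ)
    (hind : LinearIndependent ℚ (Fin.cons (1 : ℝ) a : Fin (n + 1) → ℝ)) :
    Dense ((kronG a : Set (Fin n → ℝ))) := by
  classical
  set H := (kronG a).topologicalClosure with hHdef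
  have hHclosed : IsClosed (H : Set (Fin n → ℝ)) :=
    AddSubgroup.isClosed_topologicalClosure _
  have hGH : ∀ x ∈ kronG a, x ∈ H := fun x hx => (kronG a).le_topologicalClosure hx
  suffices htop : ∀ x : Fin n → ℝ, x ∈ H by
    intro x
    have h := htop x
    rwa [← SetLike.mem_coe, AddSubgroup.topologicalClosure_coe] at h
  -- the subspace of lines contained in H
  set V : Submodule ℝ (Fin n → ℝ) :=
    { carrier := {v | ∀ t : ℝ, t • v ∈ H}
      add_mem' := fun hv hw t => by rw [smul_add]; exact H.add_mem (hv t) (hw t)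
      zero_mem' := fun t => by rw [smul_zero]; exact H.zero_mem
      smul_mem' := fun c v hv t => by rw [smul_smul]; exact hv (t * c) } with hVdef
  have hVmem : ∀ v : Fin n → ℝ, v ∈ V ↔ ∀ t : ℝ, t • v ∈ H := fun v => Iff.rfl
  have hVH : ∀ v ∈ V, v ∈ H := fun v hv => by simpa using (hVmem v).mp hv 1
  by_cases hV : V = ⊤
  · intro x; exact hVH x (hV ▸ Submodule.mem_top)
  exfalso
  obtain ⟨W, hVW⟩ := Submodule.exists_isCompl V
  have hWclosed : IsClosed (W : Set (Fin n → ℝ)) := Submodule.closed_of_finiteDimensional W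
  -- discreteness of H ∩ W near 0
  have hdisc : ∃ ε > 0, ∀ x ∈ H, x ∈ W → ‖x‖ < ε → x = 0 := by
    by_contra hcon
    push_neg at hcon
    have hseq : ∀ m : ℕ, ∃ x, x ∈ H ∧ x ∈ W ∧ ‖x‖ < 1/(m+1) ∧ x ≠ 0 := by
      intro m
      obtain ⟨x, h1, h2, h3, h4⟩ := hcon (1/(m+1)) (by positivity)
      exact ⟨x, h1, h2, h3, h4⟩
    choose x hxH hxW hxn hx0 using hseq
    have hxpos : ∀ m, 0 < ‖x m‖ := fun m => norm_pos_iff.mpr (hx0 m)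
    set u : ℕ → Fin n → ℝ := fun m => ‖x m‖⁻¹ • x m with hudef
    have hu1 : ∀ m, ‖u m‖ = 1 := by
      intro m
      rw [hudef]
      simp only [norm_smul, Real.norm_eq_abs, abs_inv, abs_norm]
      exact inv_mul_cancel₀ (ne_of_gt (hxpos m))
    have husphere : ∀ m, u m ∈ Metric.sphere (0 : Fin n → ℝ) 1 := by
      intro m
      simp [mem_sphere_zero_iff_norm, hu1 m]
    obtain ⟨u₀, hu₀s, φ, hφ, hconv⟩ :=
      (isCompact_sphere (0 : Fin n → ℝ) 1).tendsto_subseq husphere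
    have hu₀norm : ‖u₀‖ = 1 := by simpa [mem_sphere_zero_iff_norm] using hu₀s
    have hu₀W : u₀ ∈ W := by
      refine hWclosed.mem_of_tendsto hconv (Eventually.of_forall fun m => ?_)
      exact W.smul_mem _ (hxW (φ m))
    have hxlim : Tendsto (fun m => ‖x (φ m)‖) atTop (𝓝 0) := by
      have hb : ∀ m : ℕ, ‖x (φ m)‖ ≤ 1/(m+1) := by
        intro m
        refine (hxn (φ m)).le.trans ?_
        have h1 : (m : ℝ) + 1 ≤ (φ m : ℝ) + 1 := by
          have h2 := hφ.le_apply (x := m)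
          have : (m:ℝ) ≤ (φ m : ℝ) := by exact_mod_cast h2
          linarith
        exact one_div_le_one_div_of_le (by positivity) h1
      exact squeeze_zero (fun m => norm_nonneg _) hb tendsto_one_div_add_atTop_nhds_zero_nat
    have hu₀V : u₀ ∈ V := by
      rw [hVmem]
      intro t
      have hb : ∀ m, |(⌊t / ‖x (φ m)‖⌋ : ℝ) * ‖x (φ m)‖ - t| ≤ ‖x (φ m)‖ := by
        intro m
        set r := ‖x (φ m)‖ with hr
        have hrpos : 0 < r := hxpos _
        have h1 : (⌊t/r⌋ : ℝ) * r - t = -(Int.fract (t/r) * r) := by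
          have hfl : (⌊t/r⌋:ℝ) = t/r - Int.fract (t/r) := by rw [Int.fract]; ring
          rw [hfl]
          field_simp
          ring
        rw [h1, abs_neg, abs_mul]
        have hf0 : 0 ≤ Int.fract (t/r) := Int.fract_nonneg _
        have hf1 : Int.fract (t/r) ≤ 1 := le_of_lt (Int.fract_lt_one _)
        rw [abs_of_nonneg hf0, abs_of_pos hrpos]
        nlinarith
      have hlim : Tendsto (fun m => (⌊t / ‖x (φ m)‖⌋ : ℝ) * ‖x (φ m)‖) atTop (𝓝 t) := by
        have hsq := squeeze_zero (fun m => abs_nonneg _) hb hxlim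
        rw [tendsto_iff_dist_tendsto_zero]
        simpa [Real.dist_eq] using hsq
      have heq : ∀ m, (⌊t / ‖x (φ m)‖⌋ : ℤ) • x (φ m)
          = ((⌊t / ‖x (φ m)‖⌋ : ℝ) * ‖x (φ m)‖) • u (φ m) := by
        intro m
        rw [hudef]
        simp only [smul_smul]
        rw [mul_assoc, mul_inv_cancel₀ (ne_of_gt (hxpos (φ m))), mul_one,
          ← Int.cast_smul_eq_zsmul ℝ]
      have htend : Tendsto (fun m => (⌊t / ‖x (φ m)‖⌋ : ℤ) • x (φ m)) atTop (𝓝 (t • u₀)) := by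
        simp only [heq]
        exact hlim.smul hconv
      refine hHclosed.mem_of_tendsto htend (Eventually.of_forall fun m => ?_)
      exact H.zsmul_mem (hxH _) _
    have hu₀0 : u₀ = 0 := by
      have hd := hVW.disjoint
      rw [Submodule.disjoint_def] at hd
      exact hd u₀ hu₀V hu₀W
    rw [hu₀0] at hu₀norm
    simp at hu₀norm
  obtain ⟨ε, hε, hdisc⟩ := hdisc
  -- the lattice part
  set D : Submodule ℤ (Fin n → ℝ) :=
    AddSubgroup.toIntSubmodule (H ⊓ W.toAddSubgroup) with hDdef
  have hDmem : ∀ x : Fin n → ℝ, x ∈ D ↔ x ∈ H ∧ x ∈ W := fun x => Iff.rfl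
  set W' : Submodule ℝ (Fin n → ℝ) := Submodule.span ℝ (D : Set (Fin n → ℝ)) with hW'def
  have hDW' : (D : Set (Fin n → ℝ)) ⊆ (W' : Set (Fin n → ℝ)) := Submodule.subset_span
  have hW'W : W' ≤ W := by
    rw [hW'def, Submodule.span_le]; intro x hx; exact ((hDmem x).mp hx).2
  set L : Submodule ℤ W' := D.comap ((W'.subtype).restrictScalars ℤ) with hLdef
  have hLmem : ∀ x : W', x ∈ L ↔ (x : Fin n → ℝ) ∈ D := fun x => Iff.rfl
  -- decomposition of H
  have hdecomp : ∀ x ∈ H, ∃ v ∈ V, ∃ w, w ∈ D ∧ x = v + w := by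
    intro x hx
    have : x ∈ V ⊔ W := by rw [hVW.sup_eq_top]; trivial
    obtain ⟨v, hv, w, hw, hvw⟩ := Submodule.mem_sup.mp this
    refine ⟨v, hv, w, ⟨?_, hw⟩, hvw.symm⟩
    have : w = x - v := by rw [← hvw]; ring
    rw [this]
    exact H.sub_mem hx (hVH v hv)
  -- the standard basis vectors lie in H
  have hsingle : ∀ i : Fin n, (Pi.single i (1:ℝ)) ∈ H := by
    intro i
    refine hGH _ ⟨0, fun j => if j = i then 1 else 0, ?_⟩
    funext j
    by_cases h : j = i <;> simp [Pi.single_apply, h]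
  have haH : a ∈ H := hGH _ ⟨1, 0, by funext j; simp⟩
  -- V ⊔ W' = ⊤
  have hWtop : V ⊔ W' = ⊤ := by
    rw [eq_top_iff, ← (Pi.basisFun ℝ (Fin n)).span_eq, Submodule.span_le]
    rintro _ ⟨i, rfl⟩
    have hx : Pi.basisFun ℝ (Fin n) i = Pi.single i 1 := by
      funext j
      simp [Pi.basisFun_apply]
    obtain ⟨v, hv, w, hw, hvw⟩ := hdecomp _ (hsingle i)
    rw [hx, hvw]
    exact Submodule.add_mem _ (Submodule.mem_sup_left hv)
      (Submodule.mem_sup_right (Submodule.subset_span hw))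
  have hW'ne : W' ≠ ⊥ := by
    intro h
    rw [h, sup_bot_eq] at hWtop
    exact hV hWtop
  have hLdisc : DiscreteTopology L := by
    rw [discreteTopology_iff_isOpen_singleton_zero]
    have hset : ({0} : Set L) = (fun x : L => ((x : W') : Fin n → ℝ)) ⁻¹' (Metric.ball 0 ε) := by
      ext y
      simp only [Set.mem_singleton_iff, Set.mem_preimage, Metric.mem_ball, dist_zero_right]
      constructor
      · rintro rfl; simpa using hε
      · intro hy
        have hyD : ((y : W') : Fin n → ℝ) ∈ D := (hLmem y.1).mp y.2
        have h0 := hdisc _ ((hDmem _).mp hyD).1 ((hDmem _).mp hyD).2 hy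
        exact Subtype.ext (Subtype.ext h0)
    rw [hset]
    exact Metric.isOpen_ball.preimage (continuous_subtype_val.comp continuous_subtype_val)
  have hLlat : IsZLattice ℝ L := by
    refine ⟨?_⟩
    apply Submodule.map_injective_of_injective (Submodule.injective_subtype W')
    rw [Submodule.map_span, Submodule.map_top, Submodule.range_subtype]
    have himg : W'.subtype '' (L : Set W') = (D : Set (Fin n → ℝ)) := by
      ext p
      constructor
      · rintro ⟨y, hy, rfl⟩; exact (hLmem y).mp hy
      · intro hp; exact ⟨⟨p, hDW' hp⟩, (hLmem _).mpr hp, rfl⟩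
    rw [himg]
  have hfree : Module.Free ℤ L := ZLattice.module_free ℝ L
  have hfin : Module.Finite ℤ L := ZLattice.module_finite ℝ L
  set b := Module.Free.chooseBasis ℤ L with hbdef
  set c := b.ofZLatticeBasis ℝ L with hcdef
  have hnt : Nontrivial W' := Submodule.nontrivial_iff_ne_bot.mpr hW'ne
  have hι : Nonempty (Module.Free.ChooseBasisIndex ℤ L) := c.index_nonempty
  obtain ⟨i₀⟩ := hι
  -- the coordinate functional
  set S : Submodule ℝ (Fin n → ℝ) :=
    Submodule.span ℝ ((fun i => ((c i : W') : Fin n → ℝ)) '' {i | i ≠ i₀}) with hSdef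
  set Q : Submodule ℝ (Fin n → ℝ) := V ⊔ S with hQdef
  have hcW' : ∀ i, ((c i : W') : Fin n → ℝ) ∈ W' := fun i => (c i).2
  have hcindep : LinearIndependent ℝ (fun i => ((c i : W') : Fin n → ℝ)) := by
    have := c.linearIndependent
    exact this.map' (W'.subtype) (Submodule.ker_subtype W')
  have hx₀ : ((c i₀ : W') : Fin n → ℝ) ∉ Q := by
    intro hmem
    obtain ⟨v, hv, s, hs, hvs⟩ := Submodule.mem_sup.mp hmem
    have hsW' : s ∈ W' := by
      have : S ≤ W' := by
        rw [hSdef, Submodule.span_le]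
        rintro x ⟨i, _, rfl⟩; exact hcW' i
      exact this hs
    have hvW : v ∈ W := hW'W (by
      have : v = ((c i₀ : W') : Fin n → ℝ) - s := by rw [← hvs]; ring
      rw [this]; exact W'.sub_mem (hcW' i₀) hsW')
    have hv0 : v = 0 := by
      have := hVW.disjoint
      rw [Submodule.disjoint_def] at this
      exact this v hv hvW
    rw [hv0, zero_add] at hvs
    exact LinearIndependent.notMem_span_image hcindep (by simp : i₀ ∉ {i | i ≠ i₀}) (hvs ▸ hs)
  obtain ⟨f, hf0, hfQ⟩ := Q.exists_dual_map_eq_bot_of_notMem hx₀ inferInstance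
  have hfQ' : ∀ x ∈ Q, f x = 0 := by
    intro x hx
    have : f x ∈ Q.map f := Submodule.mem_map_of_mem hx
    rwa [hfQ, Submodule.mem_bot] at this
  set g : Module.Dual ℝ (Fin n → ℝ) := (f ((c i₀ : W') : Fin n → ℝ))⁻¹ • f with hgdef
  have hgQ : ∀ x ∈ Q, g x = 0 := by
    intro x hx; rw [hgdef]; simp [hfQ' x hx]
  have hgV : ∀ x ∈ V, g x = 0 := fun x hx => hgQ x (Submodule.mem_sup_left hx)
  have hgc₀ : g ((c i₀ : W') : Fin n → ℝ) = 1 := by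
    rw [hgdef]; simp [inv_mul_cancel₀ hf0]
  have hgc : ∀ i, i ≠ i₀ → g ((c i : W') : Fin n → ℝ) = 0 := by
    intro i hi
    exact hgQ _ (Submodule.mem_sup_right (Submodule.subset_span ⟨i, hi, rfl⟩))
  -- g maps D into ℤ
  have hgD : ∀ x ∈ D, ∃ q : ℤ, g x = q := by
    intro x hx
    set xL : L := ⟨⟨x, hDW' hx⟩, (hLmem _).mpr hx⟩ with hxLdef
    set φ : L →ₗ[ℤ] (Fin n → ℝ) := (W'.subtype.restrictScalars ℤ).comp L.subtype with hφdef
    have hrepr : xL = ∑ i, b.repr xL i • b i := (b.sum_repr xL).symm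
    refine ⟨b.repr xL i₀, ?_⟩
    have hE : x = ∑ i, b.repr xL i • ((c i : W') : (Fin n → ℝ)) := by
      have hbc : ∀ i, φ (b i) = ((c i : W') : Fin n → ℝ) := by
        intro i
        have h1 : c i = (b i : W') := by rw [hcdef]; exact Module.Basis.ofZLatticeBasis_apply ℝ L b i
        show ((b i : W') : Fin n → ℝ) = ((c i : W') : Fin n → ℝ)
        rw [h1]
      have hthis := congrArg φ hrepr
      rw [map_sum] at hthis
      simp only [map_zsmul, hbc] at hthis
      exact hthis
    calc g x = ∑ i, b.repr xL i • g ((c i : W') : (Fin n → ℝ)) := by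
          conv_lhs => rw [hE]
          rw [map_sum]
          exact Finset.sum_congr rfl fun i _ => (map_zsmul g _ _)
      _ = (b.repr xL i₀ : ℝ) := by
          rw [Finset.sum_eq_single i₀]
          · rw [hgc₀]; simp
          · intro i _ hi
            rw [hgc i hi]; simp
          · intro h; exact absurd (Finset.mem_univ i₀) h
  -- g maps H into ℤ
  have hgH : ∀ x ∈ H, ∃ q : ℤ, g x = q := by
    intro x hx
    obtain ⟨v, hv, w, hw, rfl⟩ := hdecomp x hx
    obtain ⟨q, hq⟩ := hgD w hw
    exact ⟨q, by rw [map_add, hgV v hv, zero_add, hq]⟩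
  -- contradiction with linear independence
  choose m hm using fun i => hgH (Pi.single i (1:ℝ)) (hsingle i)
  obtain ⟨q₀, hq₀⟩ := hgH a haH
  have hga : g a = ∑ j, (m j : ℝ) * a j := by
    have : a = ∑ j, a j • (Pi.single j 1 : Fin n → ℝ) := by
      funext i; simp [Pi.single_apply, Finset.sum_apply]
    conv_lhs => rw [this]
    rw [map_sum]
    simp only [map_smul, smul_eq_mul]
    exact Finset.sum_congr rfl fun j _ => by rw [hm j]; ring
  have hm0 : m = 0 := indep_consequence hind m q₀ (by rw [← hga, hq₀])
  -- then g vanishes on all standard basis vectors, so g = 0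
  have hgzero : ∀ y, g y = 0 := by
    intro y
    have hexp : y = ∑ j, y j • (Pi.single j 1 : Fin n → ℝ) := by
      funext i
      simp [Pi.single_apply, Finset.sum_apply]
    conv_lhs => rw [hexp]
    rw [map_sum]
    apply Finset.sum_eq_zero
    intro j _
    rw [map_smul, hm j, hm0]
    norm_num
  rw [hgzero] at hgc₀
  exact zero_ne_one hgc₀

lemma kron_small (a : Fin n → ℝ)
    (hind : LinearIndependent ℚ (Fin.cons (1 : ℝ) a : Fin (n + 1) → ℝ))
    (hn : 0 < n) {η : ℝ} (hη : 0 < η) :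
    ∃ (k : ℤ) (z : Fin n → ℤ), 1 ≤ k ∧
      ‖(fun j => (k:ℝ) * a j + z j : Fin n → ℝ)‖ < η := by
  haveI : Nonempty (Fin n) := ⟨⟨0, hn⟩⟩
  have hd := kron_dense a hind
  set η' : ℝ := min (η/3) (1/3) with hη'def
  have hη' : 0 < η' := by
    apply lt_min (by positivity) (by norm_num)
  obtain ⟨g₁, hg₁G, hg₁⟩ := Metric.mem_closure_iff.mp (hd 0) (η'/4) (by positivity)
  obtain ⟨g₂, hg₂G, hg₂⟩ :=
    Metric.mem_closure_iff.mp (hd (fun _ => η')) (η'/4) (by positivity)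
  have hdG : g₂ - g₁ ∈ kronG a := (kronG a).sub_mem hg₂G hg₁G
  obtain ⟨k, z, hkz⟩ := hdG
  have hconst : ‖(fun _ => η' : Fin n → ℝ)‖ = η' := by
    rw [pi_norm_const]
    exact Real.norm_of_nonneg hη'.le
  have hg₁n : ‖g₁‖ < η'/4 := by
    have := hg₁
    rwa [dist_comm, dist_eq_norm, sub_zero] at this
  have hg₂n : ‖g₂ - (fun _ => η')‖ < η'/4 := by
    have := hg₂
    rwa [dist_comm, dist_eq_norm] at this
  have hub : ‖g₂ - g₁‖ < 3/2 * η' := by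
    have h1 : g₂ - g₁ = (g₂ - (fun _ => η')) + ((fun _ => η' : Fin n → ℝ) - g₁) := by abel
    calc ‖g₂ - g₁‖ ≤ ‖g₂ - (fun _ => η')‖ + ‖(fun _ => η' : Fin n → ℝ) - g₁‖ := by
            rw [h1]; exact norm_add_le _ _
      _ ≤ ‖g₂ - (fun _ => η')‖ + (‖(fun _ => η' : Fin n → ℝ)‖ + ‖g₁‖) := by
            gcongr
            exact norm_sub_le _ _
      _ < η'/4 + (η' + η'/4) := by rw [hconst]; gcongr
      _ = 3/2 * η' := by ring
  have hlb : η'/2 ≤ ‖g₂ - g₁‖ := by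
    have h2 : ‖(g₂ - (fun _ => η')) - g₁‖ ≤ η'/2 := by
      calc ‖(g₂ - (fun _ => η')) - g₁‖ ≤ ‖g₂ - (fun _ => η')‖ + ‖g₁‖ := norm_sub_le _ _
        _ ≤ η'/4 + η'/4 := add_le_add hg₂n.le hg₁n.le
        _ = η'/2 := by ring
    have h3 : (g₂ - (fun _ => η')) - g₁ = (g₂ - g₁) - (fun _ => η') := by abel
    rw [h3] at h2
    nlinarith [hconst, norm_sub_norm_le ((fun _ => η' : Fin n → ℝ)) (g₂ - g₁),
      norm_sub_rev ((g₂ - g₁)) ((fun _ => η' : Fin n → ℝ))]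
  have hk0 : k ≠ 0 := by
    intro hk
    rw [hk] at hkz
    have hz0 : ∀ j, z j = 0 := by
      intro j
      have h5 : |((z j : ℝ))| ≤ ‖g₂ - g₁‖ := by
        have := norm_le_pi_norm (g₂ - g₁) j
        rw [hkz] at this ⊢
        simpa using this
      have h6 : |((z j : ℝ))| < 1 := by
        have : (3:ℝ)/2 * η' ≤ 3/2 * (1/3) := by
          have : η' ≤ 1/3 := min_le_right _ _
          linarith
        calc |((z j : ℝ))| ≤ ‖g₂ - g₁‖ := h5
          _ < 3/2 * η' := hub
          _ ≤ 1/2 := by linarith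
          _ < 1 := by norm_num
      have h7 : |z j| < 1 := by exact_mod_cast (by rwa [← Int.cast_abs] at h6 : ((|z j| : ℤ) : ℝ) < 1)
      exact Int.abs_lt_one_iff.mp h7
    have : g₂ - g₁ = 0 := by
      rw [hkz]; funext j; simp [hz0 j]
    rw [this] at hlb
    simp at hlb
    linarith
  have hη'η : 3/2 * η' < η := by
    have : η' ≤ η/3 := min_le_left _ _
    linarith
  rcases le_or_gt 1 k with hk1 | hk1
  · exact ⟨k, z, hk1, by rw [← hkz]; linarith⟩
  · have hkneg : k ≤ -1 := by omega
    refine ⟨-k, -z, by omega, ?_⟩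
    have : (fun j => ((-k : ℤ):ℝ) * a j + ((-z) j : ℤ)) = -(g₂ - g₁) := by
      rw [hkz]; funext j; push_cast [Pi.neg_apply]; ring
    rw [this, norm_neg]
    linarith

lemma kron_nat_approx (a : Fin n → ℝ)
    (hind : LinearIndependent ℚ (Fin.cons (1 : ℝ) a : Fin (n + 1) → ℝ))
    (hn : 0 < n) (c : Fin n → ℝ) {δ : ℝ} (hδ : 0 < δ) :
    ∃ (k : ℕ) (z : Fin n → ℤ),
      ‖(fun j => (k:ℝ) * a j + z j) - c‖ < δ := by
  have hd := kron_dense a hind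
  obtain ⟨g, hgG, hg⟩ := Metric.mem_closure_iff.mp (hd c) (δ/2) (by positivity)
  obtain ⟨k₀, z₀, hkz₀⟩ := hgG
  have hgc : ‖(fun j => (k₀:ℝ) * a j + z₀ j) - c‖ < δ/2 := by
    rw [← hkz₀, ← dist_eq_norm, dist_comm]
    exact hg
  rcases le_or_gt 0 k₀ with hk₀ | hk₀
  · refine ⟨k₀.toNat, z₀, ?_⟩
    have : ((k₀.toNat : ℕ) : ℝ) = (k₀ : ℝ) := by exact_mod_cast Int.toNat_of_nonneg hk₀
    rw [this]
    linarith
  · set T : ℕ := (-k₀).toNat with hTdef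
    have hT : (T : ℤ) = -k₀ := Int.toNat_of_nonneg (by omega)
    obtain ⟨k₁, z₁, hk₁, hsmall⟩ := kron_small a hind hn
      (show (0:ℝ) < δ/(2*(T+1)) by positivity)
    refine ⟨(k₀ + T * k₁).toNat, z₀ + T • z₁, ?_⟩
    have hnonneg : 0 ≤ k₀ + T * k₁ := by
      have : (T:ℤ) * 1 ≤ T * k₁ := by
        apply mul_le_mul_of_nonneg_left hk₁ (by positivity)
      omega
    have hcast : (((k₀ + T * k₁).toNat : ℕ) : ℝ) = (k₀ : ℝ) + T * k₁ := by
      have := Int.toNat_of_nonneg hnonneg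
      exact_mod_cast congrArg (fun x : ℤ => (x : ℝ)) this
    have hsplit : (fun j => (((k₀ + T * k₁).toNat : ℕ) : ℝ) * a j + ((z₀ + T • z₁) j : ℤ)) - c
        = ((fun j => (k₀:ℝ) * a j + z₀ j) - c)
          + (T:ℝ) • (fun j => (k₁:ℝ) * a j + z₁ j) := by
      funext j
      simp only [Pi.add_apply, Pi.sub_apply, Pi.smul_apply, smul_eq_mul]
      rw [hcast]
      push_cast [Pi.smul_apply, nsmul_eq_mul]
      ring
    rw [hsplit]
    have hB : ‖(T:ℝ) • (fun j => (k₁:ℝ) * a j + (z₁ j : ℤ) : Fin n → ℝ)‖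
        ≤ (T:ℝ) * (δ/(2*((T:ℝ)+1))) := by
      rw [norm_smul, Real.norm_eq_abs, abs_of_nonneg (Nat.cast_nonneg T)]
      exact mul_le_mul_of_nonneg_left hsmall.le (Nat.cast_nonneg T)
    have h8 : (T:ℝ) * (δ/(2*((T:ℝ)+1))) < δ/2 := by
      have h9 : (T:ℝ) < (T:ℝ)+1 := by linarith
      have h10 : (0:ℝ) < δ/(2*((T:ℝ)+1)) := by positivity
      calc (T:ℝ) * (δ/(2*((T:ℝ)+1))) < ((T:ℝ)+1) * (δ/(2*((T:ℝ)+1))) :=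
            mul_lt_mul_of_pos_right h9 h10
        _ = δ/2 := by field_simp
    calc ‖((fun j => (k₀:ℝ) * a j + z₀ j) - c)
          + (T:ℝ) • (fun j => (k₁:ℝ) * a j + z₁ j)‖
        ≤ ‖(fun j => (k₀:ℝ) * a j + z₀ j) - c‖
          + ‖(T:ℝ) • (fun j => (k₁:ℝ) * a j + (z₁ j : ℤ) : Fin n → ℝ)‖ := norm_add_le _ _
      _ < δ/2 + (T:ℝ) * (δ/(2*((T:ℝ)+1))) := add_lt_add_of_lt_of_le hgc hB
      _ < δ/2 + δ/2 := by linarith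
      _ = δ := by ring

/-- If `a₁, …, aₙ` are negative reals such that `1, a₁, …, aₙ` are linearly independent
over `ℚ`, then the set
`{((e^{a₁})^k (−√e)^{s₁}, …, ((e^{aₙ})^k (−√e)^{sₙ}) : k, s₁, …, sₙ ∈ ℕ ∪ {0}}`
is dense in `ℝⁿ`. -/
theorem dense_exp_orbit {n : ℕ} (a : Fin n → ℝ) (ha : ∀ j, a j < 0)
    (hind : LinearIndependent ℚ (Fin.cons (1 : ℝ) a : Fin (n + 1) → ℝ)) :
    Dense {v : Fin n → ℝ | ∃ (k : ℕ) (s : Fin n → ℕ),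
      v = fun j => Real.exp (a j) ^ k * (-Real.sqrt (Real.exp 1)) ^ s j} := by
  classical
  rcases Nat.eq_zero_or_pos n with hn0 | hn
  · subst hn0
    intro x
    have hmem : (fun j : Fin 0 => Real.exp (a j) ^ (0:ℕ)
        * (-Real.sqrt (Real.exp 1)) ^ ((fun _ => 0) j : ℕ)) ∈
        {v : Fin 0 → ℝ | ∃ (k : ℕ) (s : Fin 0 → ℕ),
          v = fun j => Real.exp (a j) ^ k * (-Real.sqrt (Real.exp 1)) ^ s j} :=
      ⟨0, fun _ => 0, rfl⟩
    have hx : x = (fun j : Fin 0 => Real.exp (a j) ^ (0:ℕ)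
        * (-Real.sqrt (Real.exp 1)) ^ ((fun _ => 0) j : ℕ)) := Subsingleton.elim _ _
    rw [hx]
    exact subset_closure hmem
  haveI : Nonempty (Fin n) := ⟨⟨0, hn⟩⟩
  rw [Metric.dense_iff]
  intro x ε hε
  set y : Fin n → ℝ := fun j => if x j = 0 then ε/2 else x j with hydef
  have hy0 : ∀ j, y j ≠ 0 := by
    intro j
    simp only [hydef]
    by_cases h : x j = 0
    · rw [if_pos h]; positivity
    · rw [if_neg h]; exact h
  have hyx : ∀ j, |y j - x j| ≤ ε/2 := by
    intro j
    simp only [hydef]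
    by_cases h : x j = 0
    · rw [if_pos h, h, sub_zero, abs_of_pos (by positivity)]
    · rw [if_neg h]
      simp
      positivity
  set l : Fin n → ℝ := fun j => Real.log |y j| with hldef
  set β : Fin n → ℕ := fun j => if y j < 0 then 1 else 0 with hβdef
  set B : ℝ := ‖y‖ with hBdef
  have hBnn : 0 ≤ B := norm_nonneg _
  have hBl : ∀ j, Real.exp (l j) = |y j| := fun j =>
    Real.exp_log (abs_pos.mpr (hy0 j))
  have hlB : ∀ j, Real.exp (l j) ≤ B := by
    intro j
    rw [hBl j]
    have := norm_le_pi_norm y j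
    rwa [Real.norm_eq_abs] at this
  set δ : ℝ := min (1/2) (ε/(2*(2*B+1))) with hδdef
  have hδpos : 0 < δ := lt_min (by norm_num) (by positivity)
  have hδhalf : δ ≤ 1/2 := min_le_left _ _
  have hδε : δ ≤ ε/(2*(2*B+1)) := min_le_right _ _
  set cc : Fin n → ℝ := fun j => l j - (β j : ℝ)/2 with hccdef
  -- find K₀ such that cc j - K₀ * a j ≥ 1 for all j
  obtain ⟨K₀, hK₀⟩ : ∃ K : ℕ, ∀ j, 1 ≤ cc j - (K:ℝ) * a j := by
    refine ⟨⌈Finset.univ.sup' Finset.univ_nonempty (fun j => (1 - cc j)/(-a j))⌉₊,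
      fun j => ?_⟩
    have h1 : (1 - cc j)/(-a j)
        ≤ Finset.univ.sup' Finset.univ_nonempty (fun j => (1 - cc j)/(-a j)) :=
      Finset.le_sup' (fun j => (1 - cc j)/(-a j)) (Finset.mem_univ j)
    have h2 := Nat.le_ceil
      (Finset.univ.sup' Finset.univ_nonempty (fun j => (1 - cc j)/(-a j)))
    have h3 := h1.trans h2
    have h4 : 0 < -a j := by linarith [ha j]
    have h5 := (div_le_iff₀ h4).mp h3
    linarith
  obtain ⟨k, z, hkz⟩ := kron_nat_approx a hind hn
    (fun j => cc j - (K₀:ℝ) * a j) hδpos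
  set k' : ℕ := k + K₀ with hk'def
  have hco : ∀ j, |(k':ℝ) * a j + z j - cc j| < δ := by
    intro j
    have h6 := norm_le_pi_norm ((fun j => (k:ℝ) * a j + z j)
      - (fun j => cc j - (K₀:ℝ) * a j)) j
    have h7 : |(k:ℝ) * a j + z j - (cc j - (K₀:ℝ) * a j)| < δ := by
      rw [Real.norm_eq_abs] at h6
      calc |(k:ℝ) * a j + z j - (cc j - (K₀:ℝ) * a j)|
          = |((fun j => (k:ℝ) * a j + z j) - (fun j => cc j - (K₀:ℝ) * a j)) j| := by
            simp [Pi.sub_apply]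
        _ ≤ ‖(fun j => (k:ℝ) * a j + z j) - (fun j => cc j - (K₀:ℝ) * a j)‖ := h6
        _ < δ := hkz
    have h8 : (k':ℝ) * a j + z j - cc j = (k:ℝ) * a j + z j - (cc j - (K₀:ℝ) * a j) := by
      rw [hk'def]
      push_cast
      ring
    rwa [h8]
  have hz1 : ∀ j, 1 ≤ z j := by
    intro j
    have h9 := hco j
    have h10 : 1 ≤ cc j - (k':ℝ) * a j := by
      have h11 : (K₀:ℝ) ≤ (k':ℝ) := by
        rw [hk'def]; push_cast; linarith [Nat.cast_nonneg (α := ℝ) k]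
      have h12 : (k':ℝ) * a j ≤ (K₀:ℝ) * a j := by
        apply mul_le_mul_of_nonpos_right h11 (ha j).le
      linarith [hK₀ j]
    have h13 : (1:ℝ)/2 < (z j : ℝ) := by
      have := abs_lt.mp h9
      have h14 : δ ≤ 1/2 := hδhalf
      linarith [this.1, this.2]
    have : (0:ℤ) < z j := by exact_mod_cast (by linarith : (0:ℝ) < (z j:ℝ))
    omega
  set s : Fin n → ℕ := fun j => 2 * (z j).toNat + β j with hsdef
  refine ⟨(fun j => Real.exp (a j) ^ k' * (-Real.sqrt (Real.exp 1)) ^ s j),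
    ?_, ⟨k', s, rfl⟩⟩
  rw [Metric.mem_ball, dist_pi_lt_iff hε]
  intro j
  have hsqrt : Real.sqrt (Real.exp 1) = Real.exp (1/2) := by
    rw [Real.exp_half]
  set θ : ℝ := (k':ℝ) * a j + (z j:ℝ) + (β j:ℝ)/2 with hθdef
  have hpj : Real.exp (a j) ^ k' * (-Real.sqrt (Real.exp 1)) ^ s j
      = (-1:ℝ)^(β j) * Real.exp θ := by
    rw [hsqrt, neg_pow]
    have h15 : Real.exp (a j) ^ k' = Real.exp ((k':ℝ) * a j) := by
      rw [← Real.exp_nat_mul]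
    have h16 : Real.exp (1/2) ^ s j = Real.exp ((s j : ℝ) * (1/2)) := by
      rw [← Real.exp_nat_mul]
    have h17 : ((-1:ℝ)) ^ s j = (-1:ℝ)^(β j) := by
      rw [hsdef]
      simp only [pow_add, pow_mul]
      norm_num
    have hznn : (0:ℤ) ≤ z j := by linarith [hz1 j]
    have hzt : (((z j).toNat : ℕ) : ℝ) = ((z j : ℝ)) := by
      exact_mod_cast congrArg (fun t : ℤ => (t:ℝ)) (Int.toNat_of_nonneg hznn)
    have h18 : ((s j : ℝ)) = 2 * (z j : ℝ) + (β j : ℝ) := by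
      rw [hsdef]
      push_cast
      rw [hzt]
      try ring
    rw [h15, h16, h17, h18]
    have h19 : Real.exp ((k':ℝ) * a j) * Real.exp ((2 * (z j:ℝ) + (β j:ℝ)) * (1/2))
        = Real.exp θ := by
      rw [← Real.exp_add]
      congr 1
      rw [hθdef]
      ring
    rw [← h19]
    try ring
  have hθl : |θ - l j| < δ := by
    have := hco j
    have h19 : θ - l j = (k':ℝ) * a j + z j - cc j := by
      rw [hθdef, hccdef]
      ring
    rwa [h19]
  have hyj : y j = (-1:ℝ)^(β j) * Real.exp (l j) := by
    rw [hBl j, hβdef]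
    by_cases h : y j < 0
    · simp only [if_pos h, pow_one]
      rw [abs_of_neg h]; ring
    · simp only [if_neg h, pow_zero, one_mul]
      rw [abs_of_nonneg (not_lt.mp h)]
  have hexp_bound : |Real.exp θ - Real.exp (l j)| < ε/2 := by
    have h20 : Real.exp θ - Real.exp (l j) = Real.exp (l j) * (Real.exp (θ - l j) - 1) := by
      rw [mul_sub, ← Real.exp_add]
      ring_nf
    have h21 : |Real.exp (θ - l j) - 1| ≤ 2 * |θ - l j| :=
      Real.abs_exp_sub_one_le (by linarith [hθl, hδhalf] : |θ - l j| ≤ 1)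
    have h22 : |Real.exp θ - Real.exp (l j)| ≤ Real.exp (l j) * (2 * |θ - l j|) := by
      rw [h20, abs_mul, abs_of_pos (Real.exp_pos _)]
      exact mul_le_mul_of_nonneg_left h21 (Real.exp_pos _).le
    have h23 : Real.exp (l j) * (2 * |θ - l j|) ≤ B * (2 * δ) := by
      apply mul_le_mul (hlB j) (by linarith [hθl] : 2 * |θ - l j| ≤ 2 * δ)
        (by positivity) hBnn
    have h24 : B * (2 * δ) < ε/2 := by
      have h25 : B * (2 * δ) ≤ B * (2 * (ε/(2*(2*B+1)))) :=
        mul_le_mul_of_nonneg_left (by linarith) hBnn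
      have heq : B * (2 * (ε/(2*(2*B+1)))) = ε * (B/(2*B+1)) := by
        field_simp
      have hhalf : B/(2*B+1) < 1/2 := by
        rw [div_lt_iff₀ (by linarith : (0:ℝ) < 2*B+1)]
        linarith
      have h26 : B * (2 * (ε/(2*(2*B+1)))) < ε/2 := by
        rw [heq]
        calc ε * (B/(2*B+1)) < ε * (1/2) := by
              exact mul_lt_mul_of_pos_left hhalf hε
          _ = ε/2 := by ring
      linarith
    calc |Real.exp θ - Real.exp (l j)| ≤ Real.exp (l j) * (2 * |θ - l j|) := h22
      _ ≤ B * (2 * δ) := h23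
      _ < ε/2 := h24
  rw [hpj, Real.dist_eq]
  have h28 : |(-1:ℝ)^(β j) * Real.exp θ - x j|
      ≤ |(-1:ℝ)^(β j) * Real.exp θ - y j| + |y j - x j| := by
    have := abs_sub_abs_le_abs_sub ((-1:ℝ)^(β j) * Real.exp θ - y j) (x j - y j)
    calc |(-1:ℝ)^(β j) * Real.exp θ - x j|
        = |((-1:ℝ)^(β j) * Real.exp θ - y j) + (y j - x j)| := by ring_nf
      _ ≤ _ := abs_add_le _ _
  have h29 : |(-1:ℝ)^(β j) * Real.exp θ - y j| = |Real.exp θ - Real.exp (l j)| := by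
    rw [hyj, ← mul_sub, abs_mul]
    have : |(-1:ℝ)^(β j)| = 1 := by
      rw [abs_pow, abs_neg, abs_one, one_pow]
    rw [this, one_mul]
  calc |(-1:ℝ)^(β j) * Real.exp θ - x j|
      ≤ |(-1:ℝ)^(β j) * Real.exp θ - y j| + |y j - x j| := h28
    _ < ε/2 + ε/2 := by
        rw [h29]
        exact add_lt_add_of_lt_of_le hexp_bound (hyx j)
    _ = ε := by ring
end

section
/- Let a, b ∈ ℝ with −1 < a < 0, b > 1 and ln|a|/ln b irrational. Let n ≥ 2 and let A = diag(a_1, …, a_n), B = diag(b_1, …, b_n) be the diagonal n×n real matrices with a_1 = a, b_1 = b and a_j, b_j real numbers satisfying |a_j| > 1 and |b_j| > 1 for j = 2, …, n. Then: (i) the set {x ∈ ℝ^n : J_{(A,B)}(x) = ℝ^n} equals {(x_1, 0, …, 0)ᵗ : x_1 ∈ ℝ}; in particular the pair (A,B) is locally hypercyclic; and (ii) the pair (A,B) is not hypercyclic, i.e. no vector y ∈ ℝ^n has {A^k B^l y : k, l ∈ ℕ∪{0}} dense in ℝ^n. -/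
open Filter Topology

/-- The extended limit set `J_{(A,B)}(x)` of a pair of `n × n` real matrices acting on
`ℝⁿ`: the set of `y` such that there exist a sequence `xₘ → x` and sequences of
non-negative integers `kₘ, lₘ` with `kₘ + lₘ → ∞` and `A^{kₘ} B^{lₘ} xₘ → y`. -/
def JSetPair {n : ℕ} (A B : Matrix (Fin n) (Fin n) ℝ) (x : Fin n → ℝ) :
    Set (Fin n → ℝ) :=
  {y | ∃ (u : ℕ → Fin n → ℝ) (k l : ℕ → ℕ),
    Tendsto u atTop (𝓝 x) ∧
    Tendsto (fun m => k m + l m) atTop atTop ∧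
    Tendsto (fun m => (A ^ k m * B ^ l m).mulVec (u m)) atTop (𝓝 y)}

lemma step1 (p θ ε : ℝ) (hp : 0 < p) (hirr : Irrational (θ / p)) (hε : 0 < ε) :
    ∃ (N : ℕ) (K : ℤ), ((N:ℝ) * θ - K * p ≠ 0 ∧ |(N:ℝ) * θ - K * p| < ε) := by
  set M : ℕ := ⌈p / ε⌉₊ with hM
  have hM0 : 0 < M := Nat.ceil_pos.2 (div_pos hp hε)
  set f : ℕ → ℝ := fun l => Int.fract ((l : ℝ) * (θ / p)) with hf
  have hf0 : ∀ l, 0 ≤ f l := fun l => Int.fract_nonneg _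
  have hf1 : ∀ l, f l < 1 := fun l => Int.fract_lt_one _
  -- pigeonhole on Fin (M+1) → Fin M
  set g : Fin (M + 1) → Fin M := fun i => ⟨⌊f i * M⌋₊, by
    have : f i * M < 1 * M := by
      apply mul_lt_mul_of_pos_right (hf1 i) (by exact_mod_cast hM0)
    rw [one_mul] at this
    exact Nat.floor_lt (mul_nonneg (hf0 _) (Nat.cast_nonneg _)) |>.2 (by exact_mod_cast this)⟩ with hg
  obtain ⟨i, j, hij, hgeq⟩ := Fintype.exists_ne_map_eq_of_card_lt g (by simp)
  -- wlog i < j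
  wlog hlt : (i : ℕ) < (j : ℕ) generalizing i j
  · exact this j i hij.symm hgeq.symm (by omega)
  -- the two fractional parts are close
  have hclose : |f j - f i| < 1 / M := by
    have h1 : (⌊f i * M⌋₊ : ℝ) ≤ f i * M := Nat.floor_le (mul_nonneg (hf0 _) (Nat.cast_nonneg _))
    have h2 : f i * M < ⌊f i * M⌋₊ + 1 := Nat.lt_floor_add_one _
    have h3 : (⌊f j * M⌋₊ : ℝ) ≤ f j * M := Nat.floor_le (mul_nonneg (hf0 _) (Nat.cast_nonneg _))
    have h4 : f j * M < ⌊f j * M⌋₊ + 1 := Nat.lt_floor_add_one _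
    have heq : (⌊f i * M⌋₊ : ℝ) = (⌊f j * M⌋₊ : ℝ) := by
      have := congrArg (fun x : Fin M => ((x : ℕ) : ℝ)) hgeq
      simpa [hg] using this
    have hMpos : (0:ℝ) < M := by exact_mod_cast hM0
    have hA : (-1:ℝ) < (f j - f i) * M := by nlinarith
    have hB : (f j - f i) * M < 1 := by nlinarith
    rw [abs_lt]
    constructor
    · have := (div_lt_iff₀ hMpos).mpr (by linarith : (-1:ℝ) < (f j - f i) * M)
      rw [neg_div] at this
      linarith
    · exact (lt_div_iff₀ hMpos).mpr hB
  refine ⟨(j : ℕ) - (i : ℕ), ⌊(j : ℝ) * (θ / p)⌋ - ⌊(i : ℝ) * (θ / p)⌋, ?_, ?_⟩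
  · -- nonzero, else θ/p rational
    intro h0
    set N : ℕ := (j : ℕ) - (i : ℕ)
    set K : ℤ := ⌊(j : ℝ) * (θ / p)⌋ - ⌊(i : ℝ) * (θ / p)⌋
    have hN : 0 < N := by omega
    have : θ / p = (K : ℝ) / N := by
      have hNr : (0:ℝ) < (N:ℝ) := by exact_mod_cast hN
      rw [div_eq_div_iff hp.ne' hNr.ne']
      linarith
    exact hirr (by rw [this]; exact ⟨(K : ℚ) / (N : ℚ), by push_cast; ring⟩)
  · -- small
    have key : ((((j:ℕ) - (i:ℕ) : ℕ)):ℝ) * θ -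
        ((⌊(j : ℝ) * (θ / p)⌋ - ⌊(i : ℝ) * (θ / p)⌋ : ℤ) : ℝ) * p = (f j - f i) * p := by
      have hcast : ((((j:ℕ) - (i:ℕ) : ℕ)):ℝ) = (j : ℕ) - (i : ℕ) := by
        push_cast [Nat.cast_sub hlt.le]; ring
      rw [hcast]
      simp only [hf, Int.fract]
      push_cast
      field_simp
      ring
    rw [key, abs_mul, abs_of_pos hp]
    calc |f j - f i| * p < (1 / M) * p := by
          apply mul_lt_mul_of_pos_right hclose hp
      _ ≤ ε := by
          have hMpos : (0:ℝ) < M := by exact_mod_cast hM0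
          have h5 : p / ε ≤ (M:ℝ) := Nat.le_ceil _
          rw [div_le_iff₀ hε] at h5
          rw [div_mul_eq_mul_div, one_mul, div_le_iff₀ hMpos]
          linarith

lemma step2 (p θ : ℝ) (hp : 0 < p) (hθ : 0 < θ) (hirr : Irrational (θ / p))
    (t ε : ℝ) (hε : 0 < ε) :
    ∃ k l : ℕ, |(l:ℝ) * θ - (k:ℝ) * p - t| < ε := by
  set ε₁ : ℝ := min ε p / 2 with hε₁def
  have hε₁pos : 0 < ε₁ := by positivity
  have hε₁ε : ε₁ < ε := by
    have := min_le_left ε p; rw [hε₁def]; linarith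
  have hε₁p : ε₁ < p := by
    have := min_le_right ε p; rw [hε₁def]; linarith
  obtain ⟨N, K, hδ0, hδε⟩ := step1 p θ ε₁ hp hirr hε₁pos
  have hNθ : 0 ≤ (N:ℝ) * θ := mul_nonneg (Nat.cast_nonneg _) hθ.le
  have habs := abs_lt.mp hδε
  rcases hδ0.lt_or_gt with hneg | hpos
  · -- δ < 0, so K ≥ 1
    have hK1 : (1:ℤ) ≤ K := by
      have h1 : (0:ℝ) < (K:ℝ) * p := by linarith
      have h2 : (0:ℝ) < (K:ℝ) := by
        by_contra hc
        push_neg at hc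
        nlinarith
      have : (0:ℤ) < K := by exact_mod_cast h2
      omega
    set j : ℤ := max ⌈t / (p - ε₁)⌉ 0 with hjdef
    have hj0 : (0:ℤ) ≤ j := le_max_right _ _
    have hj0r : (0:ℝ) ≤ (j:ℝ) := by exact_mod_cast hj0
    have hjp : t ≤ (j:ℝ) * (p - ε₁) := by
      have h1 : t / (p - ε₁) ≤ (j:ℝ) := by
        have : (⌈t / (p - ε₁)⌉:ℤ) ≤ j := le_max_left _ _
        calc t / (p - ε₁) ≤ (⌈t / (p - ε₁)⌉ : ℝ) := Int.le_ceil _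
          _ ≤ (j:ℝ) := by exact_mod_cast this
      calc t = (t / (p - ε₁)) * (p - ε₁) := by
            rw [div_mul_cancel₀ _ (ne_of_gt (by linarith : (0:ℝ) < p - ε₁))]
        _ ≤ (j:ℝ) * (p - ε₁) := mul_le_mul_of_nonneg_right h1 (by linarith)
    have hjt : t ≤ (j:ℝ) * p := by nlinarith
    set m : ℕ := ⌈((j:ℝ) * p - t) / (-((N:ℝ) * θ - K * p))⌉₊ with hmdef
    have hnegpos : 0 < -((N:ℝ) * θ - K * p) := by linarith
    have hmceil : ((j:ℝ) * p - t) / (-((N:ℝ) * θ - K * p)) ≤ (m:ℝ) := Nat.le_ceil _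
    have hm1 : (j:ℝ) * p - t ≤ (m:ℝ) * (-((N:ℝ) * θ - K * p)) := by
      calc (j:ℝ) * p - t
          = (((j:ℝ) * p - t) / (-((N:ℝ) * θ - K * p))) * (-((N:ℝ) * θ - K * p)) := by
            rw [div_mul_cancel₀ _ hnegpos.ne']
        _ ≤ (m:ℝ) * (-((N:ℝ) * θ - K * p)) :=
            mul_le_mul_of_nonneg_right hmceil hnegpos.le
    have hm2 : (m:ℝ) * (-((N:ℝ) * θ - K * p)) <
        (j:ℝ) * p - t + (-((N:ℝ) * θ - K * p)) := by
      have hnn : 0 ≤ ((j:ℝ) * p - t) / (-((N:ℝ) * θ - K * p)) :=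
        div_nonneg (by linarith) hnegpos.le
      have := Nat.ceil_lt_add_one hnn
      calc (m:ℝ) * (-((N:ℝ) * θ - K * p))
          < (((j:ℝ) * p - t) / (-((N:ℝ) * θ - K * p)) + 1) * (-((N:ℝ) * θ - K * p)) :=
            mul_lt_mul_of_pos_right this hnegpos
        _ = (j:ℝ) * p - t + (-((N:ℝ) * θ - K * p)) := by
            rw [add_mul, div_mul_cancel₀ _ hnegpos.ne', one_mul]
    -- m*K - j ≥ 0
    have hmj : (j:ℝ) ≤ (m:ℝ) := by
      have c1 : ((j:ℝ) * p - t) / ε₁ ≤ ((j:ℝ) * p - t) / (-((N:ℝ) * θ - K * p)) := by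
        gcongr
        · linarith
      have c2 : (j:ℝ) ≤ ((j:ℝ) * p - t) / ε₁ := by
        rw [le_div_iff₀ hε₁pos]
        nlinarith
      linarith
    have hkK : (0:ℤ) ≤ (m:ℤ) * K - j := by
      have h1 : (j:ℤ) ≤ (m:ℤ) := by exact_mod_cast hmj
      have h2 : (m:ℤ) ≤ (m:ℤ) * K := le_mul_of_one_le_right (Int.natCast_nonneg m) hK1
      linarith
    refine ⟨((m:ℤ) * K - j).toNat, m * N, ?_⟩
    rw [abs_lt]
    have hcast : ((((m:ℤ) * K - j).toNat : ℕ) : ℝ) = (m:ℝ) * (K:ℝ) - (j:ℝ) := by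
      rw [← Int.cast_natCast, Int.toNat_of_nonneg hkK]; push_cast; ring
    push_cast [hcast]
    constructor <;> linarith
  · -- δ > 0, so K ≥ 0
    have hK0 : (0:ℤ) ≤ K := by
      have h2 : (-1:ℝ) < (K:ℝ) := by
        by_contra hc
        push_neg at hc
        nlinarith
      have : (-1:ℤ) < K := by exact_mod_cast h2
      omega
    set j : ℤ := min ⌊t / p⌋ 0 with hjdef
    have hj0 : j ≤ 0 := min_le_right _ _
    have hjt : (j:ℝ) * p ≤ t := by
      have h1 : (j:ℝ) ≤ t / p := by
        have : (j:ℤ) ≤ ⌊t / p⌋ := min_le_left _ _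
        calc (j:ℝ) ≤ (⌊t / p⌋ : ℝ) := by exact_mod_cast this
          _ ≤ t / p := Int.floor_le _
      calc (j:ℝ) * p ≤ (t / p) * p := mul_le_mul_of_nonneg_right h1 hp.le
        _ = t := div_mul_cancel₀ _ hp.ne'
    set m : ℕ := ⌈(t - (j:ℝ) * p) / ((N:ℝ) * θ - K * p)⌉₊ with hmdef
    have hm1 : t - (j:ℝ) * p ≤ (m:ℝ) * ((N:ℝ) * θ - K * p) := by
      have := Nat.le_ceil ((t - (j:ℝ) * p) / ((N:ℝ) * θ - K * p))
      calc t - (j:ℝ) * p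
          = ((t - (j:ℝ) * p) / ((N:ℝ) * θ - K * p)) * ((N:ℝ) * θ - K * p) := by
            rw [div_mul_cancel₀ _ hpos.ne']
        _ ≤ (m:ℝ) * ((N:ℝ) * θ - K * p) := mul_le_mul_of_nonneg_right this hpos.le
    have hm2 : (m:ℝ) * ((N:ℝ) * θ - K * p) < t - (j:ℝ) * p + ((N:ℝ) * θ - K * p) := by
      have hnn : 0 ≤ (t - (j:ℝ) * p) / ((N:ℝ) * θ - K * p) :=
        div_nonneg (by linarith) hpos.le
      have := Nat.ceil_lt_add_one hnn
      calc (m:ℝ) * ((N:ℝ) * θ - K * p)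
          < ((t - (j:ℝ) * p) / ((N:ℝ) * θ - K * p) + 1) * ((N:ℝ) * θ - K * p) :=
            mul_lt_mul_of_pos_right this hpos
        _ = t - (j:ℝ) * p + ((N:ℝ) * θ - K * p) := by
            rw [add_mul, div_mul_cancel₀ _ hpos.ne', one_mul]
    have hkK : (0:ℤ) ≤ (m:ℤ) * K - j := by
      have h2 : (0:ℤ) ≤ (m:ℤ) * K := mul_nonneg (Int.natCast_nonneg m) hK0
      linarith
    refine ⟨((m:ℤ) * K - j).toNat, m * N, ?_⟩
    rw [abs_lt]
    have hcast : ((((m:ℤ) * K - j).toNat : ℕ) : ℝ) = (m:ℝ) * (K:ℝ) - (j:ℝ) := by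
      rw [← Int.cast_natCast, Int.toNat_of_nonneg hkK]; push_cast; ring
    push_cast [hcast]
    constructor <;> linarith

lemma key (a b : ℝ) (ha₁ : -1 < a) (ha₂ : a < 0) (hb : 1 < b)
    (hirr : Irrational (Real.log |a| / Real.log b)) (t : ℝ) (m : ℕ) (ε : ℝ) (hε : 0 < ε) :
    ∃ k l : ℕ, m ≤ k ∧ m ≤ l ∧ |a ^ k * b ^ l - t| < ε := by
  set α : ℝ := Real.log |a| with hαdef
  set β : ℝ := Real.log b with hβdef
  have ha0 : (0:ℝ) < |a| := abs_pos.2 (ne_of_lt ha₂)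
  have ha1 : |a| < 1 := abs_lt.2 ⟨ha₁, by linarith⟩
  have hb0 : (0:ℝ) < b := by linarith
  have hα : α < 0 := Real.log_neg ha0 ha1
  have hβ : 0 < β := Real.log_pos hb
  set p : ℝ := -(2 * α) with hpdef
  have hp : 0 < p := by rw [hpdef]; linarith
  have hirr2 : Irrational (β / p) := by
    have h1 : Irrational (β / α) := by
      have := hirr.inv
      rwa [inv_div] at this
    have heq : β / p = -(β / α / 2) := by
      rw [hpdef]
      field_simp [hα.ne]
    rw [heq]
    exact (h1.div_natCast two_ne_zero).neg
  have main : ∀ (σ : ℕ) (T δ : ℝ), 0 < δ →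
      ∃ r l : ℕ, m ≤ r ∧ m ≤ l ∧ |((2 * r + σ : ℕ) : ℝ) * α + (l : ℝ) * β - T| < δ := by
    intro σ T δ hδ
    obtain ⟨k0, l0, happ⟩ :=
      step2 p β hp hβ hirr2 (T - (m:ℝ) * (2 * α + β) - (σ:ℝ) * α) δ hδ
    refine ⟨k0 + m, l0 + m, Nat.le_add_left _ _, Nat.le_add_left _ _, ?_⟩
    have harg : ((2 * (k0 + m) + σ : ℕ) : ℝ) * α + ((l0 + m : ℕ) : ℝ) * β - T
        = (l0:ℝ) * β - (k0:ℝ) * p - (T - (m:ℝ) * (2 * α + β) - (σ:ℝ) * α) := by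
      rw [hpdef]; push_cast; ring
    rw [harg]
    exact happ
  have hval : ∀ k l : ℕ, |a| ^ k * b ^ l = Real.exp ((k:ℝ) * α + (l:ℝ) * β) := by
    intro k l
    rw [Real.exp_add, Real.exp_nat_mul, Real.exp_nat_mul, hαdef, hβdef,
      Real.exp_log ha0, Real.exp_log hb0]
  have heven : ∀ r : ℕ, a ^ (2 * r) = |a| ^ (2 * r) := by
    intro r
    rw [pow_mul, pow_mul, sq_abs]
  have hodd : ∀ r : ℕ, a ^ (2 * r + 1) = -(|a| ^ (2 * r + 1)) := by
    intro r
    rw [pow_succ, pow_succ, heven r, abs_of_neg ha₂]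
    ring
  rcases lt_trichotomy t 0 with htneg | htzero | htpos
  · -- t < 0 : use odd powers of a
    obtain ⟨δ, hδpos, hδ⟩ :=
      Metric.continuousAt_iff.mp (Real.continuous_exp.continuousAt (x := Real.log (-t))) ε hε
    obtain ⟨r, l, hr, hl, happ⟩ := main 1 (Real.log (-t)) δ hδpos
    refine ⟨2 * r + 1, l, by omega, hl, ?_⟩
    have hE := hδ (x := ((2 * r + 1 : ℕ) : ℝ) * α + (l : ℝ) * β)
      (by rw [Real.dist_eq]; exact happ)
    rw [Real.dist_eq, Real.exp_log (by linarith : (0:ℝ) < -t)] at hE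
    rw [hodd r]
    have hre : -(|a| ^ (2*r+1)) * b ^ l - t = -((|a| ^ (2*r+1)) * b ^ l - -t) := by ring
    rw [hre, abs_neg, hval]
    exact hE
  · -- t = 0 : make the product small
    obtain ⟨r, l, hr, hl, happ⟩ := main 0 (Real.log ε - 1) 1 one_pos
    refine ⟨2 * r, l, by omega, hl, ?_⟩
    simp only [Nat.add_zero] at happ
    have hEsmall : ((2 * r : ℕ) : ℝ) * α + (l : ℝ) * β < Real.log ε := by
      have h2 := (abs_lt.mp happ).2
      push_cast at h2 ⊢
      linarith
    rw [htzero, sub_zero, heven r, hval]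
    rw [abs_of_pos (Real.exp_pos _)]
    calc Real.exp (((2 * r : ℕ) : ℝ) * α + (l : ℝ) * β)
        < Real.exp (Real.log ε) := Real.exp_lt_exp.2 hEsmall
      _ = ε := Real.exp_log hε
  · -- t > 0 : even powers
    obtain ⟨δ, hδpos, hδ⟩ :=
      Metric.continuousAt_iff.mp (Real.continuous_exp.continuousAt (x := Real.log t)) ε hε
    obtain ⟨r, l, hr, hl, happ⟩ := main 0 (Real.log t) δ hδpos
    refine ⟨2 * r, l, by omega, hl, ?_⟩
    simp only [Nat.add_zero] at happ
    have hE := hδ (x := ((2 * r : ℕ) : ℝ) * α + (l : ℝ) * β)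
      (by rw [Real.dist_eq]; exact happ)
    rw [Real.dist_eq, Real.exp_log htpos] at hE
    rw [heven r, hval]
    exact hE

/-- Let `-1 < a < 0`, `b > 1` with `ln |a| / ln b` irrational, and let `A, B` be diagonal
`n × n` real matrices (`n ≥ 2`) with `A₁₁ = a`, `B₁₁ = b` and all other diagonal entries of
modulus `> 1`. Then `{x : J_{(A,B)}(x) = ℝⁿ} = {(x₁,0,…,0)ᵗ}`, so `(A,B)` is a locally
hypercyclic pair; moreover `(A,B)` is not hypercyclic. -/
theorem diagonal_pair_locally_hypercyclic_not_hypercyclic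
    (a b : ℝ) (ha₁ : -1 < a) (ha₂ : a < 0) (hb : 1 < b)
    (hirr : Irrational (Real.log |a| / Real.log b))
    (n : ℕ) (hn : 2 ≤ n) (d e : Fin n → ℝ)
    (hd0 : d ⟨0, by omega⟩ = a) (he0 : e ⟨0, by omega⟩ = b)
    (hd : ∀ j : Fin n, j ≠ ⟨0, by omega⟩ → 1 < |d j|)
    (he : ∀ j : Fin n, j ≠ ⟨0, by omega⟩ → 1 < |e j|) :
    ({x : Fin n → ℝ | JSetPair (Matrix.diagonal d) (Matrix.diagonal e) x = Set.univ}
        = {x : Fin n → ℝ | ∀ j : Fin n, j ≠ ⟨0, by omega⟩ → x j = 0}) ∧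
    (∃ x : Fin n → ℝ, x ≠ 0 ∧
        JSetPair (Matrix.diagonal d) (Matrix.diagonal e) x = Set.univ) ∧
    ¬ ∃ y : Fin n → ℝ, Dense {v : Fin n → ℝ | ∃ k l : ℕ,
        (Matrix.diagonal d ^ k * Matrix.diagonal e ^ l).mulVec y = v} := by
  have hn0 : 0 < n := by omega
  set i0 : Fin n := ⟨0, by omega⟩ with hi0
  -- action of the powers on vectors
  have hmv : ∀ (k l : ℕ) (u : Fin n → ℝ) (i : Fin n),
      (Matrix.diagonal d ^ k * Matrix.diagonal e ^ l).mulVec u i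
        = d i ^ k * e i ^ l * u i := by
    intro k l u i
    rw [Matrix.diagonal_pow, Matrix.diagonal_pow, Matrix.diagonal_mul_diagonal,
      Matrix.mulVec_diagonal]
    simp [Pi.pow_apply]
  have hdne : ∀ j : Fin n, j ≠ i0 → d j ^ (0:ℕ) ≠ 0 := by intro j _; norm_num
  -- Part A: construction
  have hJuniv : ∀ x : Fin n → ℝ, (∀ j, j ≠ i0 → x j = 0) →
      JSetPair (Matrix.diagonal d) (Matrix.diagonal e) x = Set.univ := by
    intro x hx
    apply Set.eq_univ_iff_forall.2
    intro y
    obtain ⟨k, l, hkm, hlm, v, hv, hprod⟩ :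
        ∃ (k l : ℕ → ℕ), (∀ m, m ≤ k m) ∧ (∀ m, m ≤ l m) ∧ ∃ v : ℕ → ℝ,
          Tendsto v atTop (𝓝 (x i0)) ∧
          Tendsto (fun m => a ^ k m * b ^ l m * v m) atTop (𝓝 (y i0)) := by
      by_cases hx0 : x i0 = 0
      · have hc : ∀ m : ℕ, ∃ k l : ℕ, m ≤ k ∧ m ≤ l ∧
            |a ^ k * b ^ l - ((m:ℝ) + 1)| < 1 :=
          fun m => key a b ha₁ ha₂ hb hirr ((m:ℝ) + 1) m 1 one_pos
        choose k l hkm hlm hcl using hc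
        have hcm : ∀ m : ℕ, (m:ℝ) < a ^ k m * b ^ l m := by
          intro m; have := abs_lt.mp (hcl m); linarith [this.1]
        have hcpos : ∀ m : ℕ, (0:ℝ) < a ^ k m * b ^ l m :=
          fun m => lt_of_le_of_lt (Nat.cast_nonneg m) (hcm m)
        have hctop : Tendsto (fun m => a ^ k m * b ^ l m) atTop atTop :=
          tendsto_atTop_mono (fun m => (hcm m).le) tendsto_natCast_atTop_atTop
        refine ⟨k, l, hkm, hlm, fun m => y i0 / (a ^ k m * b ^ l m), ?_, ?_⟩
        · rw [hx0]
          exact Tendsto.div_atTop tendsto_const_nhds hctop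
        · have heqf : (fun m => a ^ k m * b ^ l m * (y i0 / (a ^ k m * b ^ l m)))
              = fun _ => y i0 := by
            funext m
            rw [mul_comm, div_mul_cancel₀ _ (hcpos m).ne']
          rw [heqf]
          exact tendsto_const_nhds
      · have hc : ∀ m : ℕ, ∃ k l : ℕ, m ≤ k ∧ m ≤ l ∧
            |a ^ k * b ^ l - y i0 / x i0| < 1 / ((m:ℝ) + 1) :=
          fun m => key a b ha₁ ha₂ hb hirr (y i0 / x i0) m (1 / ((m:ℝ) + 1)) (by positivity)
        choose k l hkm hlm hcl using hc
        refine ⟨k, l, hkm, hlm, fun _ => x i0, tendsto_const_nhds, ?_⟩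
        have hctend : Tendsto (fun m => a ^ k m * b ^ l m) atTop (𝓝 (y i0 / x i0)) := by
          rw [← tendsto_sub_nhds_zero_iff]
          apply squeeze_zero_norm (fun m => ?_) tendsto_one_div_add_atTop_nhds_zero_nat
          rw [Real.norm_eq_abs]
          exact (hcl m).le
        have := hctend.mul_const (x i0)
        rwa [div_mul_cancel₀ _ hx0] at this
    have hklTop : Tendsto (fun m => k m + l m) atTop atTop :=
      tendsto_atTop_mono (fun m => le_trans (hkm m) (Nat.le_add_right _ _)) tendsto_id
    refine ⟨fun m j => if j = i0 then v m else y j / (d j ^ k m * e j ^ l m), k, l, ?_,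
      hklTop, ?_⟩
    · rw [tendsto_pi_nhds]
      intro i
      by_cases hi : i = i0
      · subst hi
        simpa using hv
      · simp only [if_neg hi]
        rw [hx i hi]
        have hρ1 : 1 < min |d i| |e i| := lt_min (hd i hi) (he i hi)
        have hρ0 : (0:ℝ) < min |d i| |e i| := by linarith
        have hlim : Tendsto (fun m => |y i| / (min |d i| |e i|) ^ (k m + l m))
            atTop (𝓝 0) :=
          Tendsto.div_atTop tendsto_const_nhds
            ((tendsto_pow_atTop_atTop_of_one_lt hρ1).comp hklTop)
        refine squeeze_zero_norm (fun m => ?_) hlim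
        rw [norm_div, norm_mul, norm_pow, norm_pow, Real.norm_eq_abs, Real.norm_eq_abs,
          Real.norm_eq_abs, pow_add]
        gcongr
        · exact min_le_left _ _
        · exact min_le_right _ _
    · rw [tendsto_pi_nhds]
      intro i
      by_cases hi : i = i0
      · subst hi
        have heq : (fun m => (Matrix.diagonal d ^ k m * Matrix.diagonal e ^ l m).mulVec
            ((fun m j => if j = i0 then v m else y j / (d j ^ k m * e j ^ l m)) m) i0)
            = fun m => a ^ k m * b ^ l m * v m := by
          funext m
          rw [hmv]
          simp [hd0, he0]
        rw [heq]
        exact hprod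
      · have hdne : d i ≠ 0 := by
          have := hd i hi; intro h; rw [h] at this; simp at this; linarith
        have hene : e i ≠ 0 := by
          have := he i hi; intro h; rw [h] at this; simp at this; linarith
        have heq : (fun m => (Matrix.diagonal d ^ k m * Matrix.diagonal e ^ l m).mulVec
            ((fun m j => if j = i0 then v m else y j / (d j ^ k m * e j ^ l m)) m) i)
            = fun _ => y i := by
          funext m
          rw [hmv]
          simp only [if_neg hi]
          field_simp
        rw [heq]
        exact tendsto_const_nhds
  -- Part B: converse
  have hJne : ∀ x : Fin n → ℝ, (∃ j, j ≠ i0 ∧ x j ≠ 0) →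
      JSetPair (Matrix.diagonal d) (Matrix.diagonal e) x ≠ Set.univ := by
    rintro x ⟨j, hj, hxj⟩ huniv
    have h0 : (0 : Fin n → ℝ) ∈ JSetPair (Matrix.diagonal d) (Matrix.diagonal e) x := by
      rw [huniv]; exact Set.mem_univ _
    obtain ⟨u, k, l, hu, hkl, hP⟩ := h0
    have huj : Tendsto (fun m => u m j) atTop (𝓝 (x j)) := (tendsto_pi_nhds.mp hu) j
    have hPj : Tendsto (fun m => d j ^ k m * e j ^ l m * u m j) atTop (𝓝 0) := by
      have := (tendsto_pi_nhds.mp hP) j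
      simpa [hmv] using this
    have hρ1 : 1 < min |d j| |e j| := lt_min (hd j hj) (he j hj)
    have hρ0 : (0:ℝ) < min |d j| |e j| := by linarith
    have hxpos : 0 < |x j| := abs_pos.2 hxj
    have hev1 : ∀ᶠ m in atTop, |x j| / 2 ≤ |u m j| :=
      huj.abs.eventually (eventually_ge_nhds (by linarith))
    have hlow : Tendsto (fun m => (min |d j| |e j|) ^ (k m + l m) * (|x j| / 2))
        atTop atTop :=
      Tendsto.atTop_mul_const (by linarith)
        ((tendsto_pow_atTop_atTop_of_one_lt hρ1).comp hkl)
    have hge : ∀ᶠ m in atTop, (min |d j| |e j|) ^ (k m + l m) * (|x j| / 2)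
        ≤ |d j ^ k m * e j ^ l m * u m j| := by
      filter_upwards [hev1] with m hm
      rw [abs_mul, abs_mul, abs_pow, abs_pow, pow_add]
      have h1 : (min |d j| |e j|) ^ k m ≤ |d j| ^ k m :=
        pow_le_pow_left₀ hρ0.le (min_le_left _ _) _
      have h2 : (min |d j| |e j|) ^ l m ≤ |e j| ^ l m :=
        pow_le_pow_left₀ hρ0.le (min_le_right _ _) _
      have hp1 : (0:ℝ) ≤ (min |d j| |e j|) ^ k m := by positivity
      have hp2 : (0:ℝ) ≤ (min |d j| |e j|) ^ l m := by positivity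
      exact mul_le_mul (mul_le_mul h1 h2 hp2 (by positivity)) hm (by linarith)
        (by positivity)
    have htop : Tendsto (fun m => |d j ^ k m * e j ^ l m * u m j|) atTop atTop :=
      tendsto_atTop_mono' atTop hge hlow
    have h1 := htop.eventually_ge_atTop 1
    have h2 : ∀ᶠ m in atTop, |d j ^ k m * e j ^ l m * u m j| < 1 :=
      hPj.abs.eventually (by simpa using eventually_lt_nhds (show (0:ℝ) < 1 by norm_num))
    obtain ⟨m, hm1, hm2⟩ := (h1.and h2).exists
    linarith
  refine ⟨?_, ?_, ?_⟩
  · ext x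
    simp only [Set.mem_setOf_eq]
    constructor
    · intro h
      by_contra hc
      push_neg at hc
      exact hJne x hc h
    · exact hJuniv x
  · refine ⟨fun j => if j = i0 then 1 else 0, ?_, hJuniv _ ?_⟩
    · intro h
      have := congrFun h i0
      simp at this
    · intro j hj
      simp [if_neg hj]
  · rintro ⟨y, hD⟩
    have hj1 : (⟨1, by omega⟩ : Fin n) ≠ i0 := by
      rw [hi0]
      simp [Fin.ext_iff]
    set j1 : Fin n := ⟨1, by omega⟩ with hj1def
    by_cases hy : y j1 = 0
    · obtain ⟨w, hwball, hwS⟩ := Metric.dense_iff.mp hD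
        (fun i => if i = j1 then (1:ℝ) else 0) (1/2) (by norm_num)
      obtain ⟨k, l, hw⟩ := hwS
      have hwj : w j1 = 0 := by
        rw [← hw, hmv, hy]; ring
      have hdist := dist_le_pi_dist w (fun i => if i = j1 then (1:ℝ) else 0) j1
      rw [Metric.mem_ball] at hwball
      rw [hwj] at hdist
      norm_num [Real.dist_eq] at hdist
      linarith [lt_of_le_of_lt hdist hwball]
    · obtain ⟨w, hwball, hwS⟩ := Metric.dense_iff.mp hD 0 (|y j1| / 2)
        (by have := abs_pos.2 hy; linarith)
      obtain ⟨k, l, hw⟩ := hwS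
      have hwj : |y j1| ≤ |w j1| := by
        rw [← hw, hmv, abs_mul, abs_mul, abs_pow, abs_pow]
        have h1 : (1:ℝ) ≤ |d j1| ^ k := one_le_pow₀ (hd j1 hj1).le
        have h2 : (1:ℝ) ≤ |e j1| ^ l := one_le_pow₀ (he j1 hj1).le
        have hP : (1:ℝ) ≤ |d j1| ^ k * |e j1| ^ l := by nlinarith
        nlinarith [abs_nonneg (y j1), mul_nonneg (sub_nonneg.2 hP) (abs_nonneg (y j1))]
      have hdist := dist_le_pi_dist w 0 j1
      rw [Metric.mem_ball] at hwball
      simp only [Pi.zero_apply, Real.dist_eq, sub_zero] at hdist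
      linarith [lt_of_le_of_lt hdist hwball, abs_pos.2 hy]
end

section
/- (i) If b ∈ ℂ∖{0} with |b| < 1, then the set of a ∈ ℂ with |a| > 1 such that {a^k b^l : k, l ∈ ℕ} is dense in ℂ is itself dense in {z ∈ ℂ : |z| > 1}. (ii) If a ∈ ℂ with |a| > 1, then the set of b ∈ ℂ with |b| < 1 such that {a^k b^l : k, l ∈ ℕ} is dense in ℂ is itself dense in {z ∈ ℂ : |z| < 1}. -/
set_option maxHeartbeats 1600000

lemma aux_key {d : ℕ → ℕ} (hd : ∀ j, d j + 1 ≤ d (j+1)) : ∀ j, d 0 + j ≤ d j := by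
  intro j
  induction j with
  | zero => simp
  | succ n ih => have := hd n; omega

lemma aux_le {d : ℕ → ℕ} (hd : ∀ j, d j + 1 ≤ d (j+1)) (j : ℕ) :
    ((2:ℝ)^(d j))⁻¹ ≤ ((2:ℝ)^(d 0))⁻¹ * (1/2)^j := by
  have h := aux_key hd j
  rw [one_div, inv_pow, ← mul_inv, ← pow_add]
  exact inv_anti₀ (by positivity) (pow_le_pow_right₀ one_le_two h)

lemma aux_summable {d : ℕ → ℕ} (hd : ∀ j, d j + 1 ≤ d (j+1)) :
    Summable (fun j => ((2:ℝ)^(d j))⁻¹) := by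
  apply Summable.of_nonneg_of_le (fun j => by positivity) (aux_le hd)
  exact (summable_geometric_of_lt_one (by norm_num) (by norm_num)).mul_left _

lemma aux_tsum_le {d : ℕ → ℕ} (hd : ∀ j, d j + 1 ≤ d (j+1)) :
    ∑' j, ((2:ℝ)^(d j))⁻¹ ≤ 2 * ((2:ℝ)^(d 0))⁻¹ := by
  have h1 : ∑' j, ((2:ℝ)^(d j))⁻¹ ≤ ∑' j:ℕ, ((2:ℝ)^(d 0))⁻¹ * (1/2)^j := by
    apply Summable.tsum_le_tsum (aux_le hd) (aux_summable hd)
    exact (summable_geometric_of_lt_one (by norm_num) (by norm_num)).mul_left _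
  rw [tsum_mul_left, tsum_geometric_of_lt_one (by norm_num) (by norm_num)] at h1
  norm_num at h1 ⊢
  linarith

lemma aux_tsum_ge {d : ℕ → ℕ} (hd : ∀ j, d j + 1 ≤ d (j+1)) :
    ((2:ℝ)^(d 0))⁻¹ ≤ ∑' j, ((2:ℝ)^(d j))⁻¹ :=
  Summable.le_tsum (aux_summable hd) 0 (fun j _ => by positivity)

lemma pow_inv_eq {e m : ℕ} (h : m ≤ e) : (2:ℝ)^m * ((2:ℝ)^e)⁻¹ = ((2:ℝ)^(e - m))⁻¹ := by
  have := pow_sub_mul_pow (2:ℝ) h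
  field_simp
  nlinarith [this]

lemma eval_split (c : ℕ → ℕ) (hc : StrictMono c) (m a p : ℕ)
    (h1 : ∀ j, j < p → 2*j + a ≤ m) (h2 : m < 2*p + a) :
    ∃ I : ℤ, ∃ E : ℝ,
      (2:ℝ)^(c m) * ∑' j, ((2:ℝ)^(c (2*j + a)))⁻¹ = I + E ∧
      ((2:ℝ)^(c (2*p + a) - c m))⁻¹ ≤ E ∧
      E ≤ 2 * ((2:ℝ)^(c (2*p + a) - c m))⁻¹ := by
  have hgap : ∀ j, c (2*j + a) + 1 ≤ c (2*(j+1) + a) := by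
    intro j
    have : c (2*j + a) < c (2*(j+1) + a) := hc (by omega)
    omega
  have hsum : Summable (fun j => ((2:ℝ)^(c (2*j + a)))⁻¹) := aux_summable hgap
  -- tail function
  set d : ℕ → ℕ := fun j => c (2*j + (2*p + a)) - c m with hd
  have hdm : ∀ j, c m < c (2*j + (2*p+a)) := fun j => hc (by omega)
  have hdgap : ∀ j, d j + 1 ≤ d (j+1) := by
    intro j
    have h3 : c (2*j + (2*p+a)) < c (2*(j+1) + (2*p+a)) := hc (by omega)
    have := hdm j
    have := hdm (j+1)
    simp only [hd]
    omega
  set E : ℝ := ∑' j, ((2:ℝ)^(c m)) * ((2:ℝ)^(c (2*(j + p) + a)))⁻¹ with hE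
  have hEeq : E = ∑' j, ((2:ℝ)^(d j))⁻¹ := by
    apply tsum_congr
    intro j
    have h4 : 2*(j+p) + a = 2*j + (2*p+a) := by ring
    rw [h4, pow_inv_eq (le_of_lt (hdm j))]
  refine ⟨∑ j ∈ Finset.range p, (2:ℤ)^(c m - c (2*j + a)), E, ?_, ?_, ?_⟩
  · rw [← tsum_mul_left (f := fun j => ((2:ℝ)^(c (2*j + a)))⁻¹) (a := (2:ℝ)^(c m)),
      ← Summable.sum_add_tsum_nat_add p (hsum.mul_left ((2:ℝ)^(c m)))
        (f := fun j => ((2:ℝ)^(c m)) * ((2:ℝ)^(c (2*j + a)))⁻¹)]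
    congr 1
    push_cast
    apply Finset.sum_congr rfl
    intro j hj
    rw [Finset.mem_range] at hj
    have hle : c (2*j + a) ≤ c m := hc.monotone (h1 j hj)
    rw [← pow_sub_mul_pow (2:ℝ) hle]
    field_simp
  · rw [hEeq]
    have h0 : d 0 = c (2*p + a) - c m := by simp [hd]
    rw [← h0]; exact aux_tsum_ge hdgap
  · rw [hEeq]
    have h0 : d 0 = c (2*p + a) - c m := by simp [hd]
    rw [← h0]; exact aux_tsum_le hdgap


lemma stepA (g E1 E2 E3 E4 s' t' δ : ℝ) (hgpos : 0 < g) (hghalf : g ≤ 1/2) (hgδ : 6*g < δ)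
    (hE1u : E1 ≤ 2*g^3) (hE2l : g ≤ E2) (hE2u : E2 ≤ 2*g)
    (hE3l : g^2 ≤ E3) (hE3u : E3 ≤ 2*g^2) (hE4l : g^6 ≤ E4) (hE4u : E4 ≤ 2*g^6)
    (hE1pos : 0 < E1) (hE4pos : 0 < E4)
    (hs0 : 0 ≤ s') (hs1 : s' < 1) (ht0 : 0 ≤ t') (ht1 : t' < 1) :
    ∃ A B : ℕ, 1 ≤ A ∧ 1 ≤ B ∧
      |(A:ℝ)*E3 + (B:ℝ)*E1 - s'| < δ ∧ |(A:ℝ)*E4 + (B:ℝ)*E2 - t'| < δ := by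
  have hE3pos : 0 < E3 := lt_of_lt_of_le (by positivity) hE3l
  have hE2pos : 0 < E2 := lt_of_lt_of_le hgpos hE2l
  have hs3 : (0:ℝ) ≤ ((⌊s'/E3⌋ : ℤ) : ℝ) := by
    exact_mod_cast Int.floor_nonneg.2 (div_nonneg hs0 hE3pos.le)
  have ht2 : (0:ℝ) ≤ ((⌊t'/E2⌋ : ℤ) : ℝ) := by
    exact_mod_cast Int.floor_nonneg.2 (div_nonneg ht0 hE2pos.le)
  obtain ⟨A, hAr⟩ : ∃ A : ℕ, (A:ℝ) = ((⌊s'/E3⌋ : ℤ) : ℝ) + 1 := by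
    refine ⟨(⌊s'/E3⌋).toNat + 1, ?_⟩
    rw [Nat.cast_add, Nat.cast_one]
    congr 1
    exact_mod_cast Int.toNat_of_nonneg (Int.floor_nonneg.2 (div_nonneg hs0 hE3pos.le))
  obtain ⟨B, hBr⟩ : ∃ B : ℕ, (B:ℝ) = ((⌊t'/E2⌋ : ℤ) : ℝ) + 1 := by
    refine ⟨(⌊t'/E2⌋).toNat + 1, ?_⟩
    rw [Nat.cast_add, Nat.cast_one]
    congr 1
    exact_mod_cast Int.toNat_of_nonneg (Int.floor_nonneg.2 (div_nonneg ht0 hE2pos.le))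
  have hA1 : 1 ≤ A := by
    have : (1:ℝ) ≤ (A:ℝ) := by rw [hAr]; linarith
    exact_mod_cast this
  have hB1 : 1 ≤ B := by
    have : (1:ℝ) ≤ (B:ℝ) := by rw [hBr]; linarith
    exact_mod_cast this
  have hdivs : s'/E3 * E3 = s' := div_mul_cancel₀ _ (ne_of_gt hE3pos)
  have hdivt : t'/E2 * E2 = t' := div_mul_cancel₀ _ (ne_of_gt hE2pos)
  have hfls := Int.floor_le (s'/E3)
  have hfls2 := Int.lt_floor_add_one (s'/E3)
  have hflt := Int.floor_le (t'/E2)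
  have hflt2 := Int.lt_floor_add_one (t'/E2)
  have hAerr0 : 0 < (A:ℝ)*E3 - s' := by
    have h := mul_lt_mul_of_pos_right hfls2 hE3pos
    rw [hdivs] at h
    rw [hAr]
    linarith
  have hAerr1 : (A:ℝ)*E3 - s' ≤ E3 := by
    have h := mul_le_mul_of_nonneg_right hfls hE3pos.le
    rw [hdivs] at h
    rw [hAr]
    linarith
  have hBerr0 : 0 < (B:ℝ)*E2 - t' := by
    have h := mul_lt_mul_of_pos_right hflt2 hE2pos
    rw [hdivt] at h
    rw [hBr]
    linarith
  have hBerr1 : (B:ℝ)*E2 - t' ≤ E2 := by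
    have h := mul_le_mul_of_nonneg_right hflt hE2pos.le
    rw [hdivt] at h
    rw [hBr]
    linarith
  have hBE1 : (B:ℝ)*E1 ≤ 4*g^2 := by
    have h1 : (B:ℝ) ≤ (1 + E2)/E2 := by rw [le_div_iff₀ hE2pos]; linarith [hBerr1]
    have h2 : (B:ℝ)*E1 ≤ (1 + E2)/E2 * E1 := mul_le_mul_of_nonneg_right h1 hE1pos.le
    have h3 : (1 + E2)/E2 * E1 ≤ (1 + E2)/E2 * (2*g^3) :=
      mul_le_mul_of_nonneg_left hE1u (by positivity)
    have h4 : (1 + E2)/E2 * (2*g^3) ≤ 4*g^2 := by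
      rw [div_mul_eq_mul_div, div_le_iff₀ hE2pos]
      have k1 : 2*g^3*E2 ≤ 2*g^3*(2*g) := mul_le_mul_of_nonneg_left hE2u (by positivity)
      have k2 : 4*g^2*g ≤ 4*g^2*E2 := mul_le_mul_of_nonneg_left hE2l (by positivity)
      have k3 : 4*g^3*g ≤ 4*g^3*(1/2) := mul_le_mul_of_nonneg_left hghalf (by positivity)
      ring_nf at k1 k2 k3 ⊢
      linarith [k1, k2, k3]
    linarith
  have hAE4 : (A:ℝ)*E4 ≤ 4*g^4 := by
    have h1 : (A:ℝ) ≤ (1 + E3)/E3 := by rw [le_div_iff₀ hE3pos]; linarith [hAerr1]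
    have h2 : (A:ℝ)*E4 ≤ (1 + E3)/E3 * E4 := mul_le_mul_of_nonneg_right h1 hE4pos.le
    have h3 : (1 + E3)/E3 * E4 ≤ (1 + E3)/E3 * (2*g^6) :=
      mul_le_mul_of_nonneg_left hE4u (by positivity)
    have h4 : (1 + E3)/E3 * (2*g^6) ≤ 4*g^4 := by
      rw [div_mul_eq_mul_div, div_le_iff₀ hE3pos]
      have k5 : g^2 ≤ 1/4 := by nlinarith [hgpos, hghalf]
      have k1 : 2*g^6*E3 ≤ 2*g^6*(2*g^2) := mul_le_mul_of_nonneg_left hE3u (by positivity)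
      have k2 : 4*g^4*g^2 ≤ 4*g^4*E3 := mul_le_mul_of_nonneg_left hE3l (by positivity)
      have k6 : 4*g^6*g^2 ≤ 4*g^6*(1/4) := mul_le_mul_of_nonneg_left k5 (by positivity)
      ring_nf at k1 k2 k6 ⊢
      linarith [k1, k2, k6]
    linarith
  have hBE1pos : 0 < (B:ℝ)*E1 := by
    have hB0 : (0:ℝ) < B := by rw [hBr]; linarith
    exact mul_pos hB0 hE1pos
  have hAE4pos : 0 < (A:ℝ)*E4 := by
    have hA0 : (0:ℝ) < A := by rw [hAr]; linarith
    exact mul_pos hA0 hE4pos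
  have hsq : 6*g^2 ≤ 3*g := by
    have hk := mul_le_mul_of_nonneg_left hghalf hgpos.le
    nlinarith [hk]
  have hcube : g^3 ≤ (1/2)^3 := pow_le_pow_left₀ hgpos.le hghalf 3
  have hg4 : 4*g^4 ≤ g := by
    have hk := mul_le_mul_of_nonneg_left hcube (by positivity : (0:ℝ) ≤ 4*g)
    ring_nf at hk ⊢
    linarith [hk, hgpos]
  refine ⟨A, B, hA1, hB1, ?_, ?_⟩
  · rw [abs_of_pos (by linarith)]
    linarith [hgpos, hgδ, hAerr1, hE3u, hBE1, hsq]
  · rw [abs_of_pos (by linarith)]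
    linarith [hgδ, hBerr1, hE2u, hAE4, hg4]

theorem lemmaA (x0 y0 : ℝ) (ε : ℝ) (hε : 0 < ε) : ∃ x y : ℝ,
    |x - x0| < ε ∧ |y - y0| < ε ∧
    ∀ s t δ : ℝ, 0 < δ → ∀ K : ℕ, ∃ k : ℕ, K ≤ k ∧ ∃ m n : ℤ,
      |(k:ℝ)*x - m - s| < δ ∧ |(k:ℝ)*y - n - t| < δ := by
  obtain ⟨N, hN⟩ := pow_unbounded_of_one_lt (4/ε) (one_lt_two (α := ℝ))
  have hN4 : 4 < ε * 2^N := by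
    rw [div_lt_iff₀ hε] at hN; linarith
  obtain ⟨c, hc, hcN, cdbl, hcbig⟩ : ∃ c : ℕ → ℕ, StrictMono c ∧ (∀ n : ℕ, N ≤ c n) ∧
      (∀ n : ℕ, c (n+1) = 2 * c n) ∧ (∀ n : ℕ, n + N < c n) := by
    refine ⟨fun n => 2^(n+N), fun a b h => Nat.pow_lt_pow_right one_lt_two (by omega),
      fun n => le_of_lt (lt_of_le_of_lt (Nat.le_add_left N n) (Nat.lt_two_pow_self)),
      fun n => ?_, fun n => Nat.lt_two_pow_self⟩
    show 2^(n+1+N) = 2 * 2^(n+N)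
    rw [show n+1+N = (n+N)+1 from by omega, pow_succ]; ring
  set P1 : ℤ := ⌊x0 * 2^N⌋ with hP1
  set P2 : ℤ := ⌊y0 * 2^N⌋ with hP2
  set X : ℝ := ∑' j : ℕ, ((2:ℝ)^(c (2*j+2)))⁻¹ with hX
  set Y : ℝ := ∑' j : ℕ, ((2:ℝ)^(c (2*j+1)))⁻¹ with hY
  have hgapX : ∀ j:ℕ, c (2*j+2) + 1 ≤ c (2*(j+1)+2) := by
    intro j; have : c (2*j+2) < c (2*(j+1)+2) := hc (by omega); omega
  have hgapY : ∀ j:ℕ, c (2*j+1) + 1 ≤ c (2*(j+1)+1) := by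
    intro j; have : c (2*j+1) < c (2*(j+1)+1) := hc (by omega); omega
  have hXpos : 0 ≤ X := tsum_nonneg (fun j => by positivity)
  have hYpos : 0 ≤ Y := tsum_nonneg (fun j => by positivity)
  have h2Npos : (0:ℝ) < 2^N := by positivity
  have hXle : X ≤ 1/2^N := by
    have h1 : X ≤ 2 * ((2:ℝ)^(c (2*0+2)))⁻¹ := aux_tsum_le (d := fun j => c (2*j+2)) hgapX
    have h2 : ((2:ℝ)^(c (2*0+2)))⁻¹ ≤ ((2:ℝ)^(N+2))⁻¹ := by
      apply inv_anti₀ (by positivity)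
      apply pow_le_pow_right₀ one_le_two
      have := hcbig (2*0+2)
      omega
    have hinv : (0:ℝ) ≤ ((2:ℝ)^N)⁻¹ := by positivity
    calc X ≤ 2 * ((2:ℝ)^(N+2))⁻¹ := by linarith
      _ ≤ 1/2^N := by rw [pow_add]; norm_num; linarith
  have hYle : Y ≤ 1/2^N := by
    have h1 : Y ≤ 2 * ((2:ℝ)^(c (2*0+1)))⁻¹ := aux_tsum_le (d := fun j => c (2*j+1)) hgapY
    have h2 : ((2:ℝ)^(c (2*0+1)))⁻¹ ≤ ((2:ℝ)^(N+1))⁻¹ := by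
      apply inv_anti₀ (by positivity)
      apply pow_le_pow_right₀ one_le_two
      have := hcbig (2*0+1)
      omega
    have hinv : (0:ℝ) ≤ ((2:ℝ)^N)⁻¹ := by positivity
    calc Y ≤ 2 * ((2:ℝ)^(N+1))⁻¹ := by linarith
      _ ≤ 1/2^N := by rw [pow_add]; norm_num; linarith
  have hεN : 1/2^N < ε := by rw [div_lt_iff₀ h2Npos]; linarith
  have habs : ∀ z0 : ℝ, ∀ Z : ℝ, 0 ≤ Z → Z ≤ 1/2^N → |(⌊z0 * 2^N⌋ : ℝ)/2^N + Z - z0| < ε := by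
    intro z0 Z hZ0 hZ1
    have hf1 : ((⌊z0 * 2^N⌋:ℤ):ℝ) ≤ z0 * 2^N := Int.floor_le _
    have hf2 : z0 * 2^N < ((⌊z0 * 2^N⌋:ℤ):ℝ) + 1 := Int.lt_floor_add_one _
    have hle : ((⌊z0 * 2^N⌋:ℤ):ℝ)/2^N ≤ z0 := by rw [div_le_iff₀ h2Npos]; exact hf1
    have hgt : z0 - 1/2^N < ((⌊z0 * 2^N⌋:ℤ):ℝ)/2^N := by
      rw [lt_div_iff₀ h2Npos, sub_mul, one_div, inv_mul_cancel₀ (ne_of_gt h2Npos)]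
      linarith
    rw [abs_lt]
    constructor <;> [linarith; linarith]
  refine ⟨(P1:ℝ)/2^N + X, (P2:ℝ)/2^N + Y, habs x0 X hXpos hXle, habs y0 Y hYpos hYle, ?_⟩
  intro s t δ hδ K
  obtain ⟨p1, hp1⟩ := pow_unbounded_of_one_lt (6/δ) (one_lt_two (α := ℝ))
  set p := max K p1 with hp
  set C := c (2*p) with hC
  have hCbig : 2*p + N < C := hcbig (2*p)
  have hc1 : c (2*p+1) = 2*C := cdbl (2*p)
  have hc2 : c (2*p+2) = 4*C := by
    have h := cdbl (2*p+1)
    rw [show 2*p+1+1 = 2*p+2 from by omega] at h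
    omega
  have hc3 : c (2*(p+1)+1) = 8*C := by
    have h := cdbl (2*p+2)
    rw [show 2*p+2+1 = 2*(p+1)+1 from by omega] at h
    omega
  set g : ℝ := ((2:ℝ)^C)⁻¹ with hg
  have hgpos : 0 < g := by positivity
  have h2C1 : (2:ℝ)^(1:ℕ) ≤ (2:ℝ)^C := pow_le_pow_right₀ one_le_two (by omega)
  have hghalf : g ≤ 1/2 := by
    rw [hg]
    calc ((2:ℝ)^C)⁻¹ ≤ ((2:ℝ)^(1:ℕ))⁻¹ := inv_anti₀ (by positivity) h2C1
      _ = 1/2 := by norm_num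
  have hgδ : 6 * g < δ := by
    have h1 : (2:ℝ)^p1 ≤ (2:ℝ)^C := pow_le_pow_right₀ one_le_two (by omega)
    have h2 : 6/δ < (2:ℝ)^C := lt_of_lt_of_le hp1 h1
    rw [div_lt_iff₀ hδ] at h2
    have h5 : g * (2:ℝ)^C = 1 := inv_mul_cancel₀ (by positivity)
    nlinarith [hgpos]
  -- the four tail evaluations
  obtain ⟨I1, E1, hI1, hE1l, hE1u⟩ := eval_split c hc (2*p) 2 p (fun j hj => by omega) (by omega)
  obtain ⟨I2, E2, hI2, hE2l, hE2u⟩ := eval_split c hc (2*p) 1 p (fun j hj => by omega) (by omega)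
  obtain ⟨I3, E3, hI3, hE3l, hE3u⟩ := eval_split c hc (2*p+1) 2 p (fun j hj => by omega) (by omega)
  obtain ⟨I4, E4, hI4, hE4l, hE4u⟩ := eval_split c hc (2*p+1) 1 (p+1) (fun j hj => by omega) (by omega)
  have hpow : ∀ r : ℕ, ((2:ℝ)^(r*C))⁻¹ = g^r := by
    intro r
    rw [hg, inv_pow, ← pow_mul, mul_comm r C]
  have he1 : c (2*p + 2) - c (2*p) = 3*C := by omega
  have he2 : c (2*p + 1) - c (2*p) = 1*C := by omega
  have he3 : c (2*p + 2) - c (2*p+1) = 2*C := by omega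
  have he4 : c (2*(p+1) + 1) - c (2*p+1) = 6*C := by omega
  rw [he1, hpow 3] at hE1l hE1u
  rw [he2, hpow 1] at hE2l hE2u
  rw [he3, hpow 2] at hE3l hE3u
  rw [he4, hpow 6] at hE4l hE4u
  have hE1pos : 0 < E1 := lt_of_lt_of_le (by positivity) hE1l
  have hE4pos : 0 < E4 := lt_of_lt_of_le (by positivity) hE4l
  rw [pow_one] at hE2l hE2u
  obtain ⟨A, B, hA1, hB1, hstep1, hstep2⟩ :=
    stepA g E1 E2 E3 E4 (Int.fract s) (Int.fract t) δ hgpos hghalf hgδ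
      hE1u hE2l hE2u hE3l hE3u hE4l hE4u hE1pos hE4pos
      (Int.fract_nonneg s) (Int.fract_lt_one s) (Int.fract_nonneg t) (Int.fract_lt_one t)
  have hKk : K ≤ A * 2^(c (2*p+1)) + B * 2^(c (2*p)) := by
    have h1 : K ≤ p := le_max_left _ _
    have h2 : C < 2^C := Nat.lt_two_pow_self
    have h3 : K ≤ 2^(c (2*p)) := by rw [← hC]; omega
    have h4 : 2^(c (2*p)) ≤ B * 2^(c (2*p)) := Nat.le_mul_of_pos_left _ (by omega)
    omega
  have hbase : ∀ (mm : ℕ) (P : ℤ), (2:ℝ)^(c mm) * ((P:ℝ)/2^N) = (P:ℝ) * (2:ℝ)^(c mm - N) := by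
    intro mm P
    have h := pow_sub_mul_pow (2:ℝ) (hcN mm)
    rw [← h]
    field_simp
  have hx1 : (2:ℝ)^(c (2*p)) * ((P1:ℝ)/2^N + X) = (P1:ℝ) * (2:ℝ)^(c (2*p) - N) + (I1:ℝ) + E1 := by
    rw [mul_add, hbase (2*p) P1, hX]
    linear_combination hI1
  have hx2 : (2:ℝ)^(c (2*p+1)) * ((P1:ℝ)/2^N + X) = (P1:ℝ) * (2:ℝ)^(c (2*p+1) - N) + (I3:ℝ) + E3 := by
    rw [mul_add, hbase (2*p+1) P1, hX]
    linear_combination hI3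
  have hy1 : (2:ℝ)^(c (2*p)) * ((P2:ℝ)/2^N + Y) = (P2:ℝ) * (2:ℝ)^(c (2*p) - N) + (I2:ℝ) + E2 := by
    rw [mul_add, hbase (2*p) P2, hY]
    linear_combination hI2
  have hy2 : (2:ℝ)^(c (2*p+1)) * ((P2:ℝ)/2^N + Y) = (P2:ℝ) * (2:ℝ)^(c (2*p+1) - N) + (I4:ℝ) + E4 := by
    rw [mul_add, hbase (2*p+1) P2, hY]
    linear_combination hI4
  refine ⟨A * 2^(c (2*p+1)) + B * 2^(c (2*p)), hKk,
    (A:ℤ)*(P1 * 2^(c (2*p+1) - N) + I3) + (B:ℤ)*(P1 * 2^(c (2*p) - N) + I1) - ⌊s⌋,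
    (A:ℤ)*(P2 * 2^(c (2*p+1) - N) + I4) + (B:ℤ)*(P2 * 2^(c (2*p) - N) + I2) - ⌊t⌋, ?_, ?_⟩
  · have heq : ((A * 2^(c (2*p+1)) + B * 2^(c (2*p)) : ℕ):ℝ)*((P1:ℝ)/2^N + X)
        - (((A:ℤ)*(P1 * 2^(c (2*p+1) - N) + I3) + (B:ℤ)*(P1 * 2^(c (2*p) - N) + I1) - ⌊s⌋ : ℤ):ℝ) - s
        = (A:ℝ)*E3 + (B:ℝ)*E1 - Int.fract s := by
      have hfr : Int.fract s = s - (⌊s⌋:ℝ) := (Int.self_sub_floor s).symm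
      push_cast
      rw [hfr]
      linear_combination (A:ℝ) * hx2 + (B:ℝ) * hx1
    rw [heq]
    exact hstep1
  · have heq : ((A * 2^(c (2*p+1)) + B * 2^(c (2*p)) : ℕ):ℝ)*((P2:ℝ)/2^N + Y)
        - (((A:ℤ)*(P2 * 2^(c (2*p+1) - N) + I4) + (B:ℤ)*(P2 * 2^(c (2*p) - N) + I2) - ⌊t⌋ : ℤ):ℝ) - t
        = (A:ℝ)*E4 + (B:ℝ)*E2 - Int.fract t := by
      have hfr : Int.fract t = t - (⌊t⌋:ℝ) := (Int.self_sub_floor t).symm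
      push_cast
      rw [hfr]
      linear_combination (A:ℝ) * hy2 + (B:ℝ) * hy1
    rw [heq]
    exact hstep2

lemma lemmaC (β1 ψ1 : ℝ) (hβ : β1 ≠ 0) (L0 θ0 ε : ℝ) (hε : 0 < ε) :
    ∃ L θ : ℝ, |L - L0| < ε ∧ |θ - θ0| < ε ∧
      ∀ T Θ δ : ℝ, 0 < δ → ∀ K : ℕ, ∃ k : ℕ, K ≤ k ∧ ∃ j n : ℤ,
        |(k:ℝ)*L + (j:ℝ)*β1 - T| < δ ∧ |(k:ℝ)*θ + (j:ℝ)*ψ1 + 2*Real.pi*(n:ℝ) - Θ| < δ := by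
  have hπ := Real.pi_pos
  have hβa : 0 < |β1| := abs_pos.2 hβ
  set D := |β1| + |ψ1| + 2*Real.pi + 1 with hD
  have hDpos : 0 < D := by positivity
  have hbD : |β1| < D := by have := abs_nonneg ψ1; rw [hD]; nlinarith
  have hψD : |ψ1| + 2*Real.pi ≤ D := by rw [hD]; nlinarith [abs_nonneg β1]
  obtain ⟨x, y, hx, hy, horb⟩ := lemmaA (L0/β1) ((θ0 - ψ1*(L0/β1))/(2*Real.pi))
      (ε/D) (by positivity)
  have key : ∀ u v W Z : ℝ, |u - W/β1| < ε/D → |v - (Z - ψ1*(W/β1))/(2*Real.pi)| < ε/D →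
      |β1*u - W| < ε ∧ |ψ1*u + 2*Real.pi*v - Z| < ε := by
    intro u v W Z hu hv
    have hWeq : β1 * (W/β1) = W := by field_simp
    have hZeq : ψ1*(W/β1) + 2*Real.pi*((Z - ψ1*(W/β1))/(2*Real.pi)) = Z := by field_simp; ring
    constructor
    · have h1 : |β1*u - W| = |β1| * |u - W/β1| := by
        rw [← abs_mul]
        congr 1
        linear_combination hWeq
      rw [h1]
      have h2 : |β1| * |u - W/β1| < |β1| * (ε/D) := mul_lt_mul_of_pos_left hu hβa
      have h3 : |β1| * (ε/D) ≤ D * (ε/D) := mul_le_mul_of_nonneg_right hbD.le (by positivity)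
      have h4 : D * (ε/D) = ε := mul_div_cancel₀ _ (ne_of_gt hDpos)
      linarith
    · have h1 : ψ1*u + 2*Real.pi*v - Z
          = ψ1*(u - W/β1) + 2*Real.pi*(v - (Z - ψ1*(W/β1))/(2*Real.pi)) := by
        linear_combination hZeq
      rw [h1]
      have h2 : |ψ1*(u - W/β1) + 2*Real.pi*(v - (Z - ψ1*(W/β1))/(2*Real.pi))|
          ≤ |ψ1| * |u - W/β1| + 2*Real.pi * |v - (Z - ψ1*(W/β1))/(2*Real.pi)| := by
        calc _ ≤ |ψ1*(u - W/β1)| + |2*Real.pi*(v - (Z - ψ1*(W/β1))/(2*Real.pi))| := abs_add_le _ _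
          _ = |ψ1| * |u - W/β1| + 2*Real.pi * |v - (Z - ψ1*(W/β1))/(2*Real.pi)| := by
              rw [abs_mul, abs_mul, abs_of_pos (by positivity : (0:ℝ) < 2*Real.pi)]
      have h3 : |ψ1| * |u - W/β1| ≤ |ψ1| * (ε/D) :=
        mul_le_mul_of_nonneg_left hu.le (abs_nonneg _)
      have h4 : 2*Real.pi * |v - (Z - ψ1*(W/β1))/(2*Real.pi)| < 2*Real.pi * (ε/D) :=
        mul_lt_mul_of_pos_left hv (by positivity)
      have h5 : (|ψ1| + 2*Real.pi) * (ε/D) ≤ D * (ε/D) :=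
        mul_le_mul_of_nonneg_right hψD (by positivity)
      have h6 : D * (ε/D) = ε := mul_div_cancel₀ _ (ne_of_gt hDpos)
      have h7 : (|ψ1| + 2*Real.pi) * (ε/D) = |ψ1| * (ε/D) + 2*Real.pi * (ε/D) := by ring
      linarith
  obtain ⟨hLc, hθc⟩ := key x y L0 θ0 hx hy
  refine ⟨β1*x, ψ1*x + 2*Real.pi*y, hLc, hθc, ?_⟩
  intro T Θ δ hδ K
  obtain ⟨k, hk, m, n', h1, h2⟩ := horb (T/β1) ((Θ - ψ1*(T/β1))/(2*Real.pi)) (δ/D) (by positivity) K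
  refine ⟨k, hk, -m, -n', ?_, ?_⟩
  · have heq : (k:ℝ)*(β1*x) + ((-m : ℤ):ℝ)*β1 - T = β1*((k:ℝ)*x - (m:ℝ) - T/β1) := by
      have hWeq : β1 * (T/β1) = T := by field_simp
      push_cast
      linear_combination hWeq
    rw [heq, abs_mul]
    have h2' : |β1| * |(k:ℝ)*x - (m:ℝ) - T/β1| < |β1| * (δ/D) := mul_lt_mul_of_pos_left h1 hβa
    have h3 : |β1| * (δ/D) ≤ D * (δ/D) := mul_le_mul_of_nonneg_right hbD.le (by positivity)
    have h4 : D * (δ/D) = δ := mul_div_cancel₀ _ (ne_of_gt hDpos)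
    linarith
  · have hZeq : ψ1*(T/β1) + 2*Real.pi*((Θ - ψ1*(T/β1))/(2*Real.pi)) = Θ := by field_simp; ring
    have heq : (k:ℝ)*(ψ1*x + 2*Real.pi*y) + ((-m:ℤ):ℝ)*ψ1 + 2*Real.pi*((-n':ℤ):ℝ) - Θ
        = ψ1*((k:ℝ)*x - (m:ℝ) - T/β1)
          + 2*Real.pi*((k:ℝ)*y - (n':ℝ) - (Θ - ψ1*(T/β1))/(2*Real.pi)) := by
      push_cast
      linear_combination hZeq
    rw [heq]
    have hb2 : |ψ1*((k:ℝ)*x - (m:ℝ) - T/β1)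
          + 2*Real.pi*((k:ℝ)*y - (n':ℝ) - (Θ - ψ1*(T/β1))/(2*Real.pi))|
        ≤ |ψ1| * |(k:ℝ)*x - (m:ℝ) - T/β1|
          + 2*Real.pi * |(k:ℝ)*y - (n':ℝ) - (Θ - ψ1*(T/β1))/(2*Real.pi)| := by
      calc _ ≤ |ψ1*((k:ℝ)*x - (m:ℝ) - T/β1)|
          + |2*Real.pi*((k:ℝ)*y - (n':ℝ) - (Θ - ψ1*(T/β1))/(2*Real.pi))| := abs_add_le _ _
        _ = _ := by rw [abs_mul, abs_mul, abs_of_pos (by positivity : (0:ℝ) < 2*Real.pi)]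
    have h3 : |ψ1| * |(k:ℝ)*x - (m:ℝ) - T/β1| ≤ |ψ1| * (δ/D) :=
      mul_le_mul_of_nonneg_left h1.le (abs_nonneg _)
    have h4 : 2*Real.pi * |(k:ℝ)*y - (n':ℝ) - (Θ - ψ1*(T/β1))/(2*Real.pi)|
        < 2*Real.pi * (δ/D) := mul_lt_mul_of_pos_left h2 (by positivity)
    have h5 : (|ψ1| + 2*Real.pi) * (δ/D) ≤ D * (δ/D) :=
      mul_le_mul_of_nonneg_right hψD (by positivity)
    have h6 : D * (δ/D) = δ := mul_div_cancel₀ _ (ne_of_gt hDpos)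
    have h7 : (|ψ1| + 2*Real.pi) * (δ/D) = |ψ1| * (δ/D) + 2*Real.pi * (δ/D) := by ring
    linarith

lemma expCont (z : ℂ) (hz : z ≠ 0) (η : ℝ) (hη : 0 < η) :
    ∃ ε : ℝ, 0 < ε ∧ ∀ L θ : ℝ, |L - Real.log (‖z‖)| < ε →
      |θ - Complex.arg z| < ε →
      ‖Complex.exp (L + θ*Complex.I) - z‖ < η := by
  have hzeq : Complex.exp ((Real.log (‖z‖) : ℂ) + (Complex.arg z : ℂ)*Complex.I) = z := by
    rw [Complex.exp_add, ← Complex.ofReal_exp, Real.exp_log (norm_pos_iff.mpr hz)]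
    exact Complex.norm_mul_exp_arg_mul_I z
  have hcont : Continuous (fun p : ℝ × ℝ => Complex.exp (p.1 + p.2*Complex.I)) := by continuity
  have hca := hcont.continuousAt (x := (Real.log (‖z‖), Complex.arg z))
  rw [Metric.continuousAt_iff] at hca
  obtain ⟨ε, hε0, hε⟩ := hca η hη
  refine ⟨ε, hε0, fun L θ hL hθ => ?_⟩
  have hd : dist ((L, θ) : ℝ × ℝ) (Real.log (‖z‖), Complex.arg z) < ε := by
    rw [Prod.dist_eq]
    apply max_lt
    · rw [Real.dist_eq]; exact hL
    · rw [Real.dist_eq]; exact hθ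
  have hres := hε hd
  simp only at hres
  rw [hzeq, Complex.dist_eq] at hres
  exact hres

lemma lemmaD (g : ℂ) (hg : g ≠ 0) (z : ℂ)
    (hsign : Real.log (‖z‖) * Real.log (‖g‖) < 0)
    (ε : ℝ) (hε : 0 < ε) :
    ∃ h : ℂ, ‖h - z‖ < ε ∧
      Real.log (‖h‖) * Real.log (‖g‖) < 0 ∧
      Dense {w : ℂ | ∃ k l : ℕ, 0 < k ∧ 0 < l ∧ h ^ k * g ^ l = w} := by
  have hπ := Real.pi_pos
  have hz : z ≠ 0 := by
    intro h
    rw [h] at hsign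
    simp at hsign
  set β1 := Real.log (‖g‖) with hβ1
  set ψ1 := Complex.arg g with hψ1
  set L0 := Real.log (‖z‖) with hL0def
  have hβne : β1 ≠ 0 := by
    intro h
    rw [h] at hsign
    simp at hsign
  have hL0ne : L0 ≠ 0 := by
    intro h
    rw [h] at hsign
    simp at hsign
  have hL0abs : 0 < |L0| := abs_pos.2 hL0ne
  obtain ⟨ε1, hε10, hcont⟩ := expCont z hz (min ε (1:ℝ)) (by positivity)
  obtain ⟨L, θ, hL, hθ, horb⟩ := lemmaC β1 ψ1 hβne L0 (Complex.arg z)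
      (min ε1 (|L0|/2)) (by positivity)
  have hLε1 : |L - L0| < ε1 := lt_of_lt_of_le hL (min_le_left _ _)
  have hLhalf : |L - L0| < |L0|/2 := lt_of_lt_of_le hL (min_le_right _ _)
  have hθε1 : |θ - Complex.arg z| < ε1 := lt_of_lt_of_le hθ (min_le_left _ _)
  -- sign of L
  have hLβ : L * β1 < 0 := by
    rcases abs_lt.1 hLhalf with ⟨ha, hb⟩
    rcases lt_trichotomy L0 0 with hneg | h0 | hpos
    · rw [abs_of_neg hneg] at ha hb
      have hLneg : L < 0 := by linarith
      have hβpos : 0 < β1 := by nlinarith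
      exact mul_neg_of_neg_of_pos hLneg hβpos
    · exact absurd h0 hL0ne
    · rw [abs_of_pos hpos] at ha hb
      have hLpos : 0 < L := by linarith
      have hβneg : β1 < 0 := by nlinarith
      exact mul_neg_of_pos_of_neg hLpos hβneg
  have hLne : L ≠ 0 := by
    intro h
    rw [h] at hLβ
    simp at hLβ
  have hLabs : 0 < |L| := abs_pos.2 hLne
  set h : ℂ := Complex.exp ((L:ℂ) + (θ:ℂ)*Complex.I) with hh
  have habsh : ‖h‖ = Real.exp L := by
    rw [hh, Complex.norm_exp]
    congr 1
    simp
  have hlogh : Real.log (‖h‖) = L := by rw [habsh, Real.log_exp]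
  have hgeq : Complex.exp ((β1:ℂ) + (ψ1:ℂ)*Complex.I) = g := by
    rw [Complex.exp_add, ← Complex.ofReal_exp, Real.exp_log (norm_pos_iff.mpr hg)]
    exact Complex.norm_mul_exp_arg_mul_I g
  refine ⟨h, ?_, ?_, ?_⟩
  · have := hcont L θ hLε1 hθε1
    exact lt_of_lt_of_le this (min_le_left _ _)
  · rw [hlogh]; exact hLβ
  · rw [Metric.dense_iff]
    intro ζ r hr
    set ζ0 : ℂ := if ζ = 0 then ((r/2 : ℝ) : ℂ) else ζ with hζ0
    have hζ0ne : ζ0 ≠ 0 := by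
      rw [hζ0]
      split
      · exact Complex.ofReal_ne_zero.mpr (ne_of_gt (by positivity))
      · assumption
    have hζ0close : ‖ζ0 - ζ‖ ≤ r/2 := by
      rw [hζ0]
      split
      · rename_i hc
        rw [hc, sub_zero]
        rw [Complex.norm_real, Real.norm_eq_abs, abs_of_pos (by positivity)]
      · simp
        positivity
    obtain ⟨ε3, hε30, hcont3⟩ := expCont ζ0 hζ0ne (r/2) (by positivity)
    set T := Real.log (‖ζ0‖) with hTdef
    set Θ := Complex.arg ζ0 with hΘdef
    obtain ⟨K0, hK0⟩ := exists_nat_gt ((ε3 + |T|)/|L|)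
    obtain ⟨k, hk, j, n, h1, h2⟩ := horb T Θ ε3 hε30 (max K0 1)
    have hkK0 : (K0:ℝ) ≤ (k:ℝ) := by exact_mod_cast le_trans (le_max_left _ _) hk
    have hkL : ε3 + |T| < (k:ℝ)*|L| := by
      have hlt : (ε3 + |T|)/|L| < (k:ℝ) := lt_of_lt_of_le hK0 hkK0
      rw [div_lt_iff₀ hLabs] at hlt
      linarith
    have hjpos : (0:ℝ) < (j:ℝ) := by
      rcases abs_lt.1 h1 with ⟨hlo, hhi⟩
      have hTle : T ≤ |T| := le_abs_self T
      have hTge : -|T| ≤ T := neg_abs_le T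
      rcases lt_trichotomy β1 0 with hbneg | hb0 | hbpos
      · have hLpos : 0 < L := by nlinarith [hLβ]
        rw [abs_of_pos hLpos] at hkL
        have hjβ : (j:ℝ)*β1 < 0 := by nlinarith
        nlinarith
      · exact absurd hb0 hβne
      · have hLneg : L < 0 := by nlinarith [hLβ]
        rw [abs_of_neg hLneg] at hkL
        have hjβ : 0 < (j:ℝ)*β1 := by nlinarith
        nlinarith
    have hj1 : 0 < j := by exact_mod_cast hjpos
    have hlr : ((j.toNat : ℕ):ℝ) = (j:ℝ) := by exact_mod_cast Int.toNat_of_nonneg hj1.le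
    have hlpos : 0 < j.toNat := by omega
    have hkpos : 0 < k := by
      have h1k : 1 ≤ max K0 1 := le_max_right _ _
      omega
    have hball := hcont3 ((k:ℝ)*L + (j:ℝ)*β1) ((k:ℝ)*θ + (j:ℝ)*ψ1 + 2*Real.pi*(n:ℝ)) h1 h2
    refine ⟨Complex.exp ((((k:ℝ)*L + (j:ℝ)*β1 : ℝ):ℂ)
      + (((k:ℝ)*θ + (j:ℝ)*ψ1 + 2*Real.pi*(n:ℝ) : ℝ):ℂ)*Complex.I), ?_, k, j.toNat,
      hkpos, hlpos, ?_⟩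
    · rw [Metric.mem_ball, Complex.dist_eq]
      have hsplit : Complex.exp ((((k:ℝ)*L + (j:ℝ)*β1 : ℝ):ℂ)
          + (((k:ℝ)*θ + (j:ℝ)*ψ1 + 2*Real.pi*(n:ℝ) : ℝ):ℂ)*Complex.I) - ζ
          = (Complex.exp ((((k:ℝ)*L + (j:ℝ)*β1 : ℝ):ℂ)
          + (((k:ℝ)*θ + (j:ℝ)*ψ1 + 2*Real.pi*(n:ℝ) : ℝ):ℂ)*Complex.I) - ζ0) + (ζ0 - ζ) := by
        ring
      rw [hsplit]
      calc ‖_‖ ≤ ‖_‖ + ‖ζ0 - ζ‖ := norm_add_le _ _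
        _ < r/2 + r/2 := by
            apply add_lt_add_of_lt_of_le hball hζ0close
        _ = r := by ring
    · have hlc : ((j.toNat : ℕ):ℂ) = ((j:ℤ):ℂ) := by exact_mod_cast hlr
      have harg : ((((k:ℝ)*L + (j:ℝ)*β1 : ℝ)):ℂ)
          + (((k:ℝ)*θ + (j:ℝ)*ψ1 + 2*Real.pi*(n:ℝ) : ℝ):ℂ)*Complex.I
          = (k:ℂ)*((L:ℂ) + (θ:ℂ)*Complex.I) + (j.toNat:ℂ)*((β1:ℂ) + (ψ1:ℂ)*Complex.I)
            + (n:ℂ)*(2*(Real.pi:ℂ)*Complex.I) := by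
        rw [hlc]
        push_cast
        ring
      rw [harg, Complex.exp_add, Complex.exp_add, Complex.exp_nat_mul, Complex.exp_nat_mul,
        Complex.exp_int_mul_two_pi_mul_I, hgeq, mul_one]



/-- (i) For `b ∈ ℂ \ {0}` with `|b| < 1`, the set of `a` with `|a| > 1` such that
`{a^k b^l : k, l ∈ ℕ}` is dense in `ℂ` is dense in `{z : |z| > 1}`.
(ii) For `a ∈ ℂ` with `|a| > 1`, the set of `b` with `|b| < 1` such that
`{a^k b^l : k, l ∈ ℕ}` is dense in `ℂ` is dense in `{z : |z| < 1}`.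
Here `ℕ` consists of the positive integers. -/
theorem dense_parameters_for_dense_power_products :
    (∀ b : ℂ, b ≠ 0 → ‖b‖ < 1 →
      {z : ℂ | 1 < ‖z‖} ⊆
        closure {a : ℂ | 1 < ‖a‖ ∧
          Dense {w : ℂ | ∃ k l : ℕ, 0 < k ∧ 0 < l ∧ a ^ k * b ^ l = w}}) ∧
    (∀ a : ℂ, 1 < ‖a‖ →
      {z : ℂ | ‖z‖ < 1} ⊆
        closure {b : ℂ | ‖b‖ < 1 ∧
          Dense {w : ℂ | ∃ k l : ℕ, 0 < k ∧ 0 < l ∧ a ^ k * b ^ l = w}}) := by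
  constructor
  · intro b hb hb1 z hz
    rw [Set.mem_setOf_eq] at hz
    rw [Metric.mem_closure_iff]
    intro ε hε
    have hlb : Real.log (‖b‖) < 0 := Real.log_neg (norm_pos_iff.mpr hb) hb1
    have hsign : Real.log (‖z‖) * Real.log (‖b‖) < 0 :=
      mul_neg_of_pos_of_neg (Real.log_pos hz) hlb
    obtain ⟨h, hh1, hh2, hh3⟩ := lemmaD b hb z hsign ε hε
    have hlogh : 0 < Real.log (‖h‖) := by
      by_contra hx
      push_neg at hx
      nlinarith [hh2]
    have hhabs : 1 < ‖h‖ := by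
      have hpos : 0 < ‖h‖ := by
        rcases eq_or_lt_of_le (norm_nonneg h) with he | hl
        · rw [← he, Real.log_zero] at hlogh; linarith
        · exact hl
      exact (Real.log_pos_iff hpos.le).1 hlogh
    refine ⟨h, ⟨hhabs, hh3⟩, ?_⟩
    rw [Complex.dist_eq, norm_sub_rev]
    exact hh1
  · intro a ha z hz
    rw [Set.mem_setOf_eq] at hz
    rw [Metric.mem_closure_iff]
    intro ε hε
    have hane : a ≠ 0 := by
      intro h
      rw [h] at ha
      simp at ha
      linarith
    have hla : 0 < Real.log (‖a‖) := Real.log_pos ha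
    -- pick a nonzero proxy target
    obtain ⟨z', hz'ne, hz'lt, hz'close⟩ :
        ∃ z' : ℂ, z' ≠ 0 ∧ ‖z'‖ < 1 ∧ ‖z' - z‖ ≤ ε/2 := by
      by_cases hc : z = 0
      · refine ⟨((min (ε/4) (1/2) : ℝ) : ℂ), ?_, ?_, ?_⟩
        · exact Complex.ofReal_ne_zero.mpr (ne_of_gt (by positivity))
        · rw [Complex.norm_real, Real.norm_eq_abs, abs_of_pos (by positivity)]
          have : min (ε/4) (1/2) ≤ 1/2 := min_le_right _ _
          linarith
        · rw [hc, sub_zero, Complex.norm_real, Real.norm_eq_abs, abs_of_pos (by positivity)]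
          have : min (ε/4) (1/2) ≤ ε/4 := min_le_left _ _
          linarith
      · exact ⟨z, hc, hz, by simp; positivity⟩
    have hsign : Real.log (‖z'‖) * Real.log (‖a‖) < 0 :=
      mul_neg_of_neg_of_pos (Real.log_neg (norm_pos_iff.mpr hz'ne) hz'lt) hla
    obtain ⟨h, hh1, hh2, hh3⟩ := lemmaD a hane z' hsign (ε/2) (by positivity)
    have hlogh : Real.log (‖h‖) < 0 := by
      by_contra hx
      push_neg at hx
      nlinarith [hh2]
    have hhabs : ‖h‖ < 1 := by
      have hpos : 0 < ‖h‖ := by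
        rcases eq_or_lt_of_le (norm_nonneg h) with he | hl
        · rw [← he, Real.log_zero] at hlogh; linarith
        · exact hl
      exact (Real.log_neg_iff hpos).1 hlogh
    have hsets : {w : ℂ | ∃ k l : ℕ, 0 < k ∧ 0 < l ∧ a ^ k * h ^ l = w}
        = {w : ℂ | ∃ k l : ℕ, 0 < k ∧ 0 < l ∧ h ^ k * a ^ l = w} := by
      ext w
      constructor
      · rintro ⟨k, l, hk, hl, he⟩
        exact ⟨l, k, hl, hk, by rw [mul_comm]; exact he⟩
      · rintro ⟨k, l, hk, hl, he⟩
        exact ⟨l, k, hl, hk, by rw [mul_comm]; exact he⟩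
    refine ⟨h, ⟨hhabs, ?_⟩, ?_⟩
    · rw [hsets]
      exact hh3
    · calc dist z h ≤ dist z z' + dist z' h := dist_triangle _ _ _
        _ < ε := by
            rw [Complex.dist_eq, Complex.dist_eq]
            have e1 : ‖z - z'‖ = ‖z' - z‖ := norm_sub_rev _ _
            have e2 : ‖z' - h‖ = ‖h - z'‖ := norm_sub_rev _ _
            rw [e1, e2]
            linarith
end

section
/- For every real number a > 1, the set { (k/a − l) / (a^k (−1)^l) : k, l ∈ ℕ } is dense in ℝ. -/
/-- Near any real `T ≥ 3` there is a positive natural of each parity within distance 1. -/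
lemma near_parity (T : ℝ) (h3 : (3:ℝ) ≤ T) :
    (∃ l : ℕ, 0 < l ∧ Odd l ∧ |T - l| ≤ 1) ∧ (∃ l : ℕ, 0 < l ∧ Even l ∧ |T - l| ≤ 1) := by
  have hT0 : (0:ℝ) ≤ T := by linarith
  set n := ⌊T⌋₊ with hn
  have hn3 : 3 ≤ n := Nat.le_floor (by exact_mod_cast h3)
  have hle : (n:ℝ) ≤ T := Nat.floor_le hT0
  have hlt : T < n + 1 := Nat.lt_floor_add_one T
  have h1 : |T - n| ≤ 1 := by rw [abs_le]; push_cast; constructor <;> linarith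
  have h2 : |T - (n+1:ℕ)| ≤ 1 := by rw [abs_le]; push_cast; constructor <;> linarith
  rcases Nat.even_or_odd n with he | ho
  · exact ⟨⟨n+1, by omega, he.add_one, h2⟩, ⟨n, by omega, he, h1⟩⟩
  · exact ⟨⟨n, by omega, ho, h1⟩, ⟨n+1, by omega, ho.add_one, h2⟩⟩

/-- For every real `a > 1`, the set `{(k/a − l) / (a^k (−1)^l) : k, l ∈ ℕ}` is dense
in `ℝ` (here `ℕ` consists of the positive integers). -/
theorem dense_quotient_set (a : ℝ) (ha : 1 < a) :
    Dense {x : ℝ | ∃ k l : ℕ, 0 < k ∧ 0 < l ∧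
      x = ((k : ℝ) / a - (l : ℝ)) / (a ^ k * (-1 : ℝ) ^ l)} := by
  rw [Metric.dense_iff]
  intro x ε hε
  have ha0 : (0:ℝ) < a := lt_trans one_pos ha
  obtain ⟨N, hN⟩ := pow_unbounded_of_one_lt (1/ε) ha
  set k := max (max N 1) ⌈3*a⌉₊ with hk
  have hk1 : 0 < k := lt_of_lt_of_le one_pos (le_trans (le_max_right N 1) (le_max_left _ _))
  have hak : (1:ℝ)/ε < a ^ k :=
    lt_of_lt_of_le hN (pow_le_pow_right₀ (le_of_lt ha)
      (le_trans (le_max_left N 1) (le_max_left _ _)))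
  have hka : 3 * a ≤ (k:ℝ) := le_trans (Nat.le_ceil _) (Nat.cast_le.mpr (le_max_right _ _))
  have h3 : (3:ℝ) ≤ (k:ℝ)/a := by rw [le_div_iff₀ ha0]; linarith
  have hakpos : (0:ℝ) < a ^ k := pow_pos ha0 k
  have hdist : (1:ℝ)/a^k < ε := by
    rw [div_lt_iff₀ hakpos]
    rw [div_lt_iff₀ hε] at hak
    linarith
  rcases le_or_gt 0 x with hx | hx
  · -- use odd l, target T = k/a + a^k x
    set T : ℝ := (k:ℝ)/a + a^k * x with hT
    have hT3 : (3:ℝ) ≤ T := by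
      have : 0 ≤ a^k * x := mul_nonneg hakpos.le hx
      simp only [hT]; linarith
    obtain ⟨l, hl0, hlo, hl1⟩ := (near_parity T hT3).1
    refine ⟨((k:ℝ)/a - l) / (a ^ k * (-1:ℝ)^l), ?_, k, l, hk1, hl0, rfl⟩
    rw [Metric.mem_ball, Real.dist_eq]
    have hneg : ((-1:ℝ))^l = -1 := hlo.neg_one_pow
    rw [hneg]
    have : ((k:ℝ)/a - l) / (a ^ k * (-1)) - x = (T - l) / a^k * (-1) := by
      rw [hT]; field_simp; ring
    rw [this, abs_mul, abs_neg, abs_one, mul_one, abs_div, abs_of_pos hakpos]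
    calc |T - l| / a^k ≤ 1 / a^k := by
          apply div_le_div_of_nonneg_right hl1 hakpos.le |>.trans_eq rfl
      _ < ε := hdist
  · -- use even l, target T = k/a - a^k x
    set T : ℝ := (k:ℝ)/a - a^k * x with hT
    have hT3 : (3:ℝ) ≤ T := by
      have : a^k * x < 0 := mul_neg_of_pos_of_neg hakpos hx
      simp only [hT]; linarith
    obtain ⟨l, hl0, hle, hl1⟩ := (near_parity T hT3).2
    refine ⟨((k:ℝ)/a - l) / (a ^ k * (-1:ℝ)^l), ?_, k, l, hk1, hl0, rfl⟩
    rw [Metric.mem_ball, Real.dist_eq]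
    have hpos : ((-1:ℝ))^l = 1 := hle.neg_one_pow
    rw [hpos, mul_one]
    have : ((k:ℝ)/a - l) / a ^ k - x = (T - l) / a^k := by
      rw [hT]; field_simp; ring
    rw [this, abs_div, abs_of_pos hakpos]
    calc |T - l| / a^k ≤ 1 / a^k := div_le_div_of_nonneg_right hl1 hakpos.le |>.trans_eq rfl
      _ < ε := hdist
end

section
/- For every real number a > 1, the set { a^k (−1)^l / (k/a − l) : k, l ∈ ℕ, k/a − l ≠ 0 } is dense in ℝ. -/
open Filter

private lemma exists_pow_gt_linear' {a : ℝ} (ha : 1 < a) (c C : ℝ) :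
    ∃ k : ℕ, 0 < k ∧ c * k + C < a ^ k := by
  have h1 : ∀ᶠ n : ℕ in atTop, (n : ℝ) ^ 1 / a ^ n < 1 / (|c| + 1) :=
    (tendsto_pow_const_div_const_pow_of_one_lt 1 ha).eventually_lt_const
      (by positivity)
  have h3 : ∀ᶠ n : ℕ in atTop, |C| ≤ (n : ℝ) :=
    tendsto_natCast_atTop_atTop.eventually_ge_atTop |C|
  obtain ⟨k, hk1, hk3, hkpos⟩ := (h1.and (h3.and (eventually_gt_atTop 0))).exists
  refine ⟨k, hkpos, ?_⟩
  have hak : (0 : ℝ) < a ^ k := pow_pos (lt_trans one_pos ha) k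
  have hcpos : (0 : ℝ) < |c| + 1 := by positivity
  rw [div_lt_div_iff₀ hak hcpos, one_mul] at hk1
  have h4 : c * k ≤ |c| * k :=
    mul_le_mul_of_nonneg_right (le_abs_self c) (Nat.cast_nonneg k)
  have h5 : C ≤ |C| := le_abs_self C
  nlinarith [hk1, h4, h5, hk3]

private lemma key_approx {a : ℝ} (ha : 1 < a) {t ε : ℝ} (ht : t ≠ 0) (hε : 0 < ε) :
    ∃ k l : ℕ, 0 < k ∧ 0 < l ∧ (k : ℝ) / a - (l : ℝ) ≠ 0 ∧
      |a ^ k * (-1 : ℝ) ^ l / ((k : ℝ) / a - (l : ℝ)) - t| < ε := by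
  have ha0 : (0 : ℝ) < a := lt_trans one_pos ha
  set b := |t| with hbdef
  have hb0 : 0 < b := abs_pos.mpr ht
  clear_value b
  obtain ⟨k, hk0, hk⟩ := exists_pow_gt_linear' ha (b / a) (3 * b + b * (b / ε))
  have hak : (0 : ℝ) < a ^ k := pow_pos ha0 k
  have hka : (0 : ℝ) ≤ (k : ℝ) / a := by positivity
  have hbε : (0 : ℝ) < b / ε := by positivity
  have H : (k : ℝ) / a + 3 + b / ε < a ^ k / b := by
    rw [lt_div_iff₀ hb0]
    calc ((k : ℝ) / a + 3 + b / ε) * b = b / a * k + (3 * b + b * (b / ε)) := by ring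
    _ < a ^ k := hk
  set L : ℝ := (k : ℝ) / a + a ^ k / b with hLdef
  have hL0 : (0 : ℝ) ≤ L := by positivity
  clear_value L
  set n0 := ⌊L⌋₊ with hn0def
  have hfloor_le : (n0 : ℝ) ≤ L := Nat.floor_le hL0
  have hlt : L < n0 + 1 := Nat.lt_floor_add_one L
  clear_value n0
  have hn0 : 1 ≤ n0 := by
    have h1L : (1 : ℝ) ≤ L := by rw [hLdef]; linarith
    calc 1 = ⌊(1 : ℝ)⌋₊ := by simp
      _ ≤ ⌊L⌋₊ := Nat.floor_mono h1L
      _ = n0 := hn0def.symm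
  -- main estimate, for any suitable l
  have main : ∀ l : ℕ, n0 ≤ l → l ≤ n0 + 1 →
      ((-1 : ℝ) ^ l = if 0 < t then -1 else 1) →
      0 < l ∧ (k : ℝ) / a - (l : ℝ) ≠ 0 ∧
        |a ^ k * (-1 : ℝ) ^ l / ((k : ℝ) / a - (l : ℝ)) - t| < ε := by
    intro l hl1 hl2 hlsign
    set σ : ℝ := if 0 < t then -1 else 1 with hσdef
    clear_value σ
    have hl1' : (n0 : ℝ) ≤ l := by exact_mod_cast hl1
    have hl2' : (l : ℝ) ≤ n0 + 1 := by exact_mod_cast hl2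
    have hδ : |L - l| ≤ 1 := abs_le.mpr ⟨by linarith, by linarith⟩
    have hd_eq : (k : ℝ) / a - l = (L - l) - a ^ k / b := by
      rw [hLdef]; ring
    have hd_neg : (k : ℝ) / a - l < -(1 + b / ε) := by
      have h1 := (abs_le.mp hδ).2
      rw [hd_eq]
      linarith
    have hd0 : (k : ℝ) / a - l ≠ 0 := by
      intro h; rw [h] at hd_neg; linarith
    have habs_d : 1 + b / ε < |(k : ℝ) / a - l| := by
      rw [abs_of_neg (by linarith : (k : ℝ) / a - l < 0)]; linarith
    have htσ : t = -(b * σ) := by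
      rw [hσdef]
      rcases lt_or_gt_of_ne ht with h | h
      · rw [if_neg (not_lt.mpr h.le), hbdef, abs_of_neg h]; ring
      · rw [if_pos h, hbdef, abs_of_pos h]; ring
    have hσabs : |σ| = 1 := by
      rw [hσdef]; split_ifs <;> simp
    have hbd : b * (L - ↑l) = a ^ k + b * ((k : ℝ) / a - ↑l) := by
      have h : (L : ℝ) - l = ((k : ℝ) / a - l) + a ^ k / b := by rw [hd_eq]; ring
      rw [h, mul_add, mul_div_cancel₀ _ hb0.ne']; ring
    have hval : a ^ k * σ / ((k : ℝ) / a - l) - t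
        = σ * b * (L - l) / ((k : ℝ) / a - l) := by
      rw [htσ, sub_neg_eq_add, eq_div_iff hd0, add_mul, div_mul_cancel₀ _ hd0]
      linear_combination (-σ) * hbd
    have estimate : |a ^ k * σ / ((k : ℝ) / a - l) - t| < ε := by
      rw [hval, abs_div, abs_mul, abs_mul, hσabs, one_mul, abs_of_pos hb0,
        div_lt_iff₀ (abs_pos.mpr hd0)]
      have e1 : b * |L - ↑l| ≤ b := by
        calc b * |L - ↑l| ≤ b * 1 := mul_le_mul_of_nonneg_left hδ hb0.le
          _ = b := mul_one b
      have e2 : ε + b < ε * |(k : ℝ) / a - ↑l| := by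
        have h3 := mul_lt_mul_of_pos_left habs_d hε
        have h4 : ε * (1 + b / ε) = ε + b := by field_simp
        linarith
      linarith
    refine ⟨by omega, hd0, ?_⟩
    rw [hlsign]
    exact estimate
  rcases Nat.even_or_odd n0 with hpar | hpar <;> by_cases ht0 : 0 < t
  · obtain ⟨p1, p2, p3⟩ := main (n0 + 1) (Nat.le_succ n0) le_rfl
      (by rw [if_pos ht0, (hpar.add_one).neg_one_pow])
    exact ⟨k, n0 + 1, hk0, p1, p2, p3⟩
  · obtain ⟨p1, p2, p3⟩ := main n0 le_rfl (Nat.le_succ n0)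
      (by rw [if_neg ht0, hpar.neg_one_pow])
    exact ⟨k, n0, hk0, p1, p2, p3⟩
  · obtain ⟨p1, p2, p3⟩ := main n0 le_rfl (Nat.le_succ n0)
      (by rw [if_pos ht0, hpar.neg_one_pow])
    exact ⟨k, n0, hk0, p1, p2, p3⟩
  · obtain ⟨p1, p2, p3⟩ := main (n0 + 1) (Nat.le_succ n0) le_rfl
      (by rw [if_neg ht0, (hpar.add_one).neg_one_pow])
    exact ⟨k, n0 + 1, hk0, p1, p2, p3⟩

/-- For every real `a > 1`, the set `{a^k (−1)^l / (k/a − l) : k, l ∈ ℕ, k/a − l ≠ 0}` is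
dense in `ℝ` (here `ℕ` consists of the positive integers). -/
theorem dense_reciprocal_quotient_set (a : ℝ) (ha : 1 < a) :
    Dense {x : ℝ | ∃ k l : ℕ, 0 < k ∧ 0 < l ∧ (k : ℝ) / a - (l : ℝ) ≠ 0 ∧
      x = a ^ k * (-1 : ℝ) ^ l / ((k : ℝ) / a - (l : ℝ))} := by
  rw [Metric.dense_iff]
  intro x r hr
  set t : ℝ := if x = 0 then r / 2 else x with htdef
  have ht : t ≠ 0 := by
    rw [htdef]
    split_ifs with hx
    · positivity
    · exact hx
  have htx : |t - x| ≤ r / 2 := by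
    rw [htdef]
    split_ifs with hx
    · rw [hx, sub_zero, abs_of_pos (by positivity)]
    · simp only [sub_self, abs_zero]; positivity
  obtain ⟨k, l, hk, hl, hne, happrox⟩ := key_approx ha ht (by positivity : (0:ℝ) < r / 2)
  refine ⟨a ^ k * (-1 : ℝ) ^ l / ((k : ℝ) / a - (l : ℝ)), ?_, ⟨k, l, hk, hl, hne, rfl⟩⟩
  rw [Metric.mem_ball, Real.dist_eq]
  calc |a ^ k * (-1 : ℝ) ^ l / ((k : ℝ) / a - (l : ℝ)) - x|
      ≤ |a ^ k * (-1 : ℝ) ^ l / ((k : ℝ) / a - (l : ℝ)) - t| + |t - x| := abs_sub_le _ _ _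
    _ < r / 2 + r / 2 := by linarith [happrox, htx]
    _ = r := by ring
end
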